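/- arXiv:2308.03925 — 4 statements merged into one kernel-verified Lean document; each statement's English description precedes it below -/
import Mathlib

section
/- Let d ≥ 1 and let K ⊆ [1,∞) be a compact set with 1 ∈ K. Then there exists a K-admissible sphere packing P of ℝ^d such that dens(P) = Δ_d(K). -/
open MeasureTheory Filter Set Metric FourierTransform
open scoped ENNReal

noncomputable section

/-- `d`-dimensional Euclidean space. -/
abbrev Ed (d : ℕ) := EuclideanSpace ℝ (Fin d)

/-- The cube `t·Q_d = [-t/2, t/2]^d`. -/
def cube (d : ℕ) (t : ℝ) : Set (Ed d) := {x | ∀ i, |x i| ≤ t / 2}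

/-- The sphere packing `X + (1/2)B_d` with set of centers `X`. -/
def packing (d : ℕ) (X : Set (Ed d)) : Set (Ed d) := ⋃ x ∈ X, closedBall x 2⁻¹

/-- `X` is a set of centers of a packing of unit-diameter spheres:
distinct centers are at distance at least `1`. -/
def IsPackingCenters (d : ℕ) (X : Set (Ed d)) : Prop :=
  X.Pairwise fun x y => 1 ≤ dist x y

/-- The (upper) density of the packing with set of centers `X`:
`limsup_{t → ∞} vol(P ∩ tQ_d) / vol(tQ_d)`. -/
def dens (d : ℕ) (X : Set (Ed d)) : ℝ≥0∞ :=
  limsup (fun t : ℝ => volume (packing d X ∩ cube d t) / volume (cube d t)) atTop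

/-- `X` is the set of centers of a `K`-admissible packing: it is a packing and all
distances between centers lie in `{0} ∪ K ∪ (sup K, ∞)`. -/
def IsAdmissible (d : ℕ) (K : Set ℝ) (X : Set (Ed d)) : Prop :=
  IsPackingCenters d X ∧
    ∀ x ∈ X, ∀ y ∈ X, dist x y ∈ insert (0 : ℝ) (K ∪ Ioi (sSup K))

/-- `Δ_d(K)`: the supremum of densities of `K`-admissible sphere packings of `ℝ^d`. -/
def packingConst (d : ℕ) (K : Set ℝ) : ℝ≥0∞ :=
  ⨆ (X : Set (Ed d)) (_ : IsAdmissible d K X), dens d X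

/-- A periodic set of centers: `X = Λ + Y` for a full-rank lattice `Λ` and a
nonempty finite set `Y`. -/
def IsPeriodic (d : ℕ) (X : Set (Ed d)) : Prop :=
  ∃ (b : Module.Basis (Fin d) ℝ (Ed d)) (Y : Finset (Ed d)), Y.Nonempty ∧
    X = {x | ∃ l ∈ Submodule.span ℤ (Set.range b), ∃ y ∈ Y, x = l + y}

open scoped Topology

/-! Take admissible packings `Xₙ` whose densities tend to `Δ_d(K)`. The glued packing copies
`Xₙ` on the shell between the cubes of sizes `rₙ` and `tₙ + 1`, where `tₙ ≥ (n + 1)(rₙ + 1)` is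
a size at which the cube density of `Xₙ` is nearly its upper density, and the next shell starts
more than `2 max(1, sup K)` further out. Distances across shells are then admissible, and at size
`tₙ` the glued packing misses only what `Xₙ` puts into the cube of size `rₙ + 1`, a fraction at
most `1/(n + 1)` of the cube. Hence its upper density is at least `limsup dens(Xₙ) = Δ_d(K)`. -/

def cubeDensity (d : ℕ) (X : Set (Ed d)) (t : ℝ) : ℝ≥0∞ :=
  volume (packing d X ∩ cube d t) / volume (cube d t)

def shell (d : ℕ) (r R : ℝ) : Set (Ed d) := cube d R \ cube d r

section Cube

variable {d : ℕ}

theorem volume_cube (d : ℕ) (t : ℝ) : volume (cube d t) = ENNReal.ofReal t ^ d := by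
  have hcube : cube d t = (MeasurableEquiv.toLp 2 (Fin d → ℝ)).symm ⁻¹'
      Set.pi univ fun _ => Icc (-(t / 2)) (t / 2) := by
    ext x
    simp only [cube, mem_ofPred_eq, mem_preimage, Set.mem_pi, Set.mem_univ, forall_true_left,
      mem_Icc, abs_le]
    rfl
  rw [hcube, (EuclideanSpace.volume_preserving_symm_measurableEquiv_toLp (Fin d)).measure_preimage
    (MeasurableSet.univ_pi fun _ => measurableSet_Icc).nullMeasurableSet, volume_pi_pi]
  simp [Real.volume_Icc]

theorem closedBall_subset_cube {a : ℝ} {x : Ed d} (hx : x ∈ cube d a) :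
    closedBall x 2⁻¹ ⊆ cube d (a + 1) := by
  intro p hp i
  have hpx : |p i - x i| ≤ 2⁻¹ := (PiLp.dist_apply_le p x i).trans (mem_closedBall.1 hp)
  calc |p i| = |x i + (p i - x i)| := by ring_nf
    _ ≤ |x i| + |p i - x i| := abs_add_le _ _
    _ ≤ a / 2 + 2⁻¹ := add_le_add (hx i) hpx
    _ = (a + 1) / 2 := by ring

theorem lt_dist_of_mem_cube_of_notMem_cube {a b s : ℝ} (hab : a + 2 * s ≤ b) {x y : Ed d}
    (hx : x ∈ cube d a) (hy : y ∉ cube d b) : s < dist x y := by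
  simp only [cube, mem_ofPred_eq, not_forall, not_le] at hy
  obtain ⟨i, hi⟩ := hy
  have hyx : |y i| - |x i| ≤ dist x y := by
    rw [dist_comm]
    exact (abs_sub_abs_le_abs_sub _ _).trans (PiLp.dist_apply_le y x i)
  linarith [hx i]

theorem volume_cube_div_volume_cube_le (hd : 1 ≤ d) {s t : ℝ} (hs : 0 ≤ s) (hst : s ≤ t) :
    volume (cube d s) / volume (cube d t) ≤ ENNReal.ofReal (s / t) := by
  rcases hs.eq_or_lt with rfl | hs
  · simp [volume_cube, zero_pow (by omega : d ≠ 0)]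
  have ht : 0 < t := hs.trans_le hst
  rw [volume_cube, volume_cube, ← ENNReal.ofReal_pow hs.le, ← ENNReal.ofReal_pow ht.le,
    ← ENNReal.ofReal_div_of_pos (by positivity), ← div_pow]
  exact ENNReal.ofReal_le_ofReal <| pow_le_of_le_one (by positivity)
    ((div_le_one ht).2 hst) (by omega)

end Cube

section Density

variable {d : ℕ}

theorem dens_le_one (X : Set (Ed d)) : dens d X ≤ 1 :=
  limsup_le_of_le (by isBoundedDefault) <| .of_forall fun _ =>
    ENNReal.div_le_of_le_mul <| by rw [one_mul]; exact measure_mono inter_subset_right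

theorem dens_le_packingConst {K : Set ℝ} {X : Set (Ed d)} (hX : IsAdmissible d K X) :
    dens d X ≤ packingConst d K :=
  le_iSup₂ (f := fun X (_ : IsAdmissible d K X) => dens d X) X hX

theorem isAdmissible_empty (K : Set ℝ) : IsAdmissible d K ∅ :=
  ⟨pairwise_empty _, fun _ hx => hx.elim⟩

theorem exists_isAdmissible_tendsto_packingConst (d : ℕ) (K : Set ℝ) :
    ∃ Xs : ℕ → Set (Ed d), (∀ n, IsAdmissible d K (Xs n)) ∧
      Tendsto (fun n => dens d (Xs n)) atTop (𝓝 (packingConst d K)) := by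
  set S := dens d '' {X | IsAdmissible d K X}
  have hΔ : packingConst d K = sSup S := by
    rw [sSup_image]; rfl
  have hS : S.Nonempty := ⟨_, mem_image_of_mem _ (show ∅ ∈ {X | IsAdmissible d K X} from
    isAdmissible_empty K)⟩
  obtain ⟨u, -, hu, humem⟩ := exists_seq_tendsto_sSup hS (OrderTop.bddAbove S)
  choose Xs hXs hdens using humem
  refine ⟨Xs, hXs, ?_⟩
  simpa only [hdens, hΔ] using hu

theorem exists_ge_dens_sub_le_cubeDensity (X : Set (Ed d)) {ε : ℝ≥0∞} (hε : ε ≠ 0) (a : ℝ) :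
    ∃ t ≥ a, dens d X - ε ≤ cubeDensity d X t := by
  by_cases h0 : dens d X = 0
  · exact ⟨a, le_rfl, by simp [h0]⟩
  have hlt : dens d X - ε < dens d X :=
    ENNReal.sub_lt_self (ne_top_of_le_ne_top ENNReal.one_ne_top (dens_le_one X)) h0 hε
  obtain ⟨t, hat, ht⟩ :=
    frequently_atTop.1 (frequently_lt_of_lt_limsup (by isBoundedDefault) hlt) a
  exact ⟨t, hat, ht.le⟩

/-- Outside the cube of size `r + 1`, the packing with centers `X` inside `t·Q_d` only uses
centers of `X` in the shell between sizes `r` and `t + 1`. -/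
theorem volume_packing_inter_cube_le {X Y : Set (Ed d)} {r t : ℝ}
    (hXY : X ∩ shell d r (t + 1) ⊆ Y) :
    volume (packing d X ∩ cube d t) ≤
      volume (packing d Y ∩ cube d t) + volume (cube d (r + 1)) := by
  refine (measure_mono fun p hp => ?_).trans (measure_union_le _ _)
  obtain ⟨hpX, hpt⟩ := hp
  by_cases hpr : p ∈ cube d (r + 1)
  · exact Or.inr hpr
  obtain ⟨x, hx, hpx⟩ := mem_iUnion₂.1 hpX
  have hxp : x ∈ closedBall p 2⁻¹ := mem_closedBall_comm.1 hpx
  have hxY : x ∈ Y :=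
    hXY ⟨hx, closedBall_subset_cube hpt hxp, fun hxr => hpr (closedBall_subset_cube hxr hpx)⟩
  exact Or.inl ⟨mem_iUnion₂.2 ⟨x, hxY, hpx⟩, hpt⟩

theorem cubeDensity_le_add (hd : 1 ≤ d) {X Y : Set (Ed d)} {r t : ℝ} (hr : 0 ≤ r)
    (hrt : r + 1 ≤ t) (hXY : X ∩ shell d r (t + 1) ⊆ Y) :
    cubeDensity d X t ≤ cubeDensity d Y t + ENNReal.ofReal ((r + 1) / t) :=
  calc cubeDensity d X t
      ≤ (volume (packing d Y ∩ cube d t) + volume (cube d (r + 1))) / volume (cube d t) :=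
        ENNReal.div_le_div_right (volume_packing_inter_cube_le hXY) _
    _ = cubeDensity d Y t + volume (cube d (r + 1)) / volume (cube d t) := ENNReal.add_div
    _ ≤ cubeDensity d Y t + ENNReal.ofReal ((r + 1) / t) := by
        gcongr
        exact volume_cube_div_volume_cube_le hd (by linarith) hrt

theorem limsup_le_dens {X : Set (Ed d)} {u e : ℕ → ℝ≥0∞} {t : ℕ → ℝ}
    (ht : Tendsto t atTop atTop) (he : Tendsto e atTop (𝓝 0))
    (hu : ∀ n, u n ≤ cubeDensity d X (t n) + e n) : limsup u atTop ≤ dens d X :=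
  calc limsup u atTop
      ≤ limsup (fun n => cubeDensity d X (t n) + e n) atTop :=
        limsup_le_limsup (.of_forall hu)
    _ = limsup (cubeDensity d X ∘ t) atTop :=
        ENNReal.limsup_add_of_right_tendsto_zero he _
    _ ≤ dens d X := by
        rw [limsup_comp]
        exact limsup_le_limsup_of_le ht

end Density

section Gluing

variable {d : ℕ}

theorem mem_same_or_lt_dist_of_mem_iUnion_shell {Xs : ℕ → Set (Ed d)} {r R : ℕ → ℝ} {g : ℝ}
    (hsep : ∀ m n, m < n → R m + 2 * g ≤ r n) {x y : Ed d}
    (hx : x ∈ ⋃ n, Xs n ∩ shell d (r n) (R n)) (hy : y ∈ ⋃ n, Xs n ∩ shell d (r n) (R n)) :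
    (∃ n, x ∈ Xs n ∧ y ∈ Xs n) ∨ g < dist x y := by
  obtain ⟨m, hxm, hxs⟩ := mem_iUnion.1 hx
  obtain ⟨n, hyn, hys⟩ := mem_iUnion.1 hy
  rcases lt_trichotomy m n with hmn | rfl | hnm
  · exact Or.inr (lt_dist_of_mem_cube_of_notMem_cube (hsep m n hmn) hxs.1 hys.2)
  · exact Or.inl ⟨m, hxm, hyn⟩
  · rw [dist_comm]
    exact Or.inr (lt_dist_of_mem_cube_of_notMem_cube (hsep n m hnm) hys.1 hxs.2)

theorem exists_glued_centers (hd : 1 ≤ d) {g : ℝ} (hg : 0 ≤ g) (Xs : ℕ → Set (Ed d)) :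
    ∃ X : Set (Ed d), (∀ x ∈ X, ∀ y ∈ X, (∃ n, x ∈ Xs n ∧ y ∈ Xs n) ∨ g < dist x y) ∧
      limsup (fun n => dens d (Xs n)) atTop ≤ dens d X := by
  set ε : ℕ → ℝ≥0∞ := fun n => ENNReal.ofReal (1 / ((n : ℝ) + 1))
  have hε : Tendsto ε atTop (𝓝 0) := by
    simpa only [ENNReal.ofReal_zero] using
      ENNReal.tendsto_ofReal tendsto_one_div_add_atTop_nhds_zero_nat
  choose T hT hTdens using fun n (r : ℝ) =>
    exists_ge_dens_sub_le_cubeDensity (Xs n) (ε := ε n) (by positivity) ((n + 1) * (r + 1))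
  set r : ℕ → ℝ := fun n => Nat.rec 0 (fun k rk => T k rk + 1 + 2 * g) n
  set t : ℕ → ℝ := fun n => T n (r n)
  have hr_succ (n : ℕ) : r (n + 1) = t n + 1 + 2 * g := rfl
  have hr (n : ℕ) : 0 ≤ r n := by
    induction n with
    | zero => exact le_rfl
    | succ n ih =>
      have : 0 ≤ ((n : ℝ) + 1) * (r n + 1) := mul_nonneg (by positivity) (by linarith)
      linarith [hr_succ n, hT n (r n)]
  have ht (n : ℕ) : r n + 1 ≤ t n ∧ (n : ℝ) + 1 ≤ t n := by
    have := hT n (r n)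
    constructor <;> nlinarith [hr n, (n.cast_nonneg : (0 : ℝ) ≤ n)]
  have hsep (m n : ℕ) (hmn : m < n) : t m + 1 + 2 * g ≤ r n := by
    rw [← hr_succ]
    refine monotone_nat_of_le_succ (fun k => ?_) hmn
    rw [hr_succ]
    linarith [ht k]
  refine ⟨⋃ n, Xs n ∩ shell d (r n) (t n + 1),
    fun x hx y hy => mem_same_or_lt_dist_of_mem_iUnion_shell hsep hx hy,
    limsup_le_dens (e := fun n => ε n + ε n) (t := t) ?_ (by simpa using hε.add hε) fun n => ?_⟩
  · exact tendsto_atTop_mono (fun n => (ht n).2)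
      (tendsto_atTop_add_const_right _ 1 tendsto_natCast_atTop_atTop)
  have hshell := cubeDensity_le_add hd (hr n) (ht n).1
    (subset_iUnion (fun k => Xs k ∩ shell d (r k) (t k + 1)) n)
  have hεn : ENNReal.ofReal ((r n + 1) / t n) ≤ ε n := by
    refine ENNReal.ofReal_le_ofReal ?_
    rw [div_le_div_iff₀ (by linarith [ht n]) (by positivity)]
    linarith [hT n (r n)]
  calc dens d (Xs n) ≤ cubeDensity d (Xs n) (t n) + ε n := tsub_le_iff_right.1 (hTdens n (r n))
    _ ≤ _ := by rw [← add_assoc]; gcongr; exact hshell.trans (by gcongr)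

end Gluing

theorem isAdmissible_of_mem_same_or_lt_dist {d : ℕ} {K : Set ℝ} {Xs : ℕ → Set (Ed d)}
    (hXs : ∀ n, IsAdmissible d K (Xs n)) {X : Set (Ed d)}
    (hX : ∀ x ∈ X, ∀ y ∈ X, (∃ n, x ∈ Xs n ∧ y ∈ Xs n) ∨ max 1 (sSup K) < dist x y) :
    IsAdmissible d K X := by
  refine ⟨fun x hx y hy hxy => ?_, fun x hx y hy => ?_⟩
  · rcases hX x hx y hy with ⟨n, hxn, hyn⟩ | hfar
    · exact (hXs n).1 hxn hyn hxy
    · exact (le_max_left _ _).trans hfar.le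
  · rcases hX x hx y hy with ⟨n, hxn, hyn⟩ | hfar
    · exact (hXs n).2 x hxn y hyn
    · exact Or.inr (Or.inr ((le_max_right _ _).trans_lt hfar))

theorem exists_optimal_packing_general
    (d : ℕ) (hd : 1 ≤ d)
    (K : Set ℝ) :
    ∃ X : Set (Ed d), IsAdmissible d K X ∧ dens d X = packingConst d K := by
  obtain ⟨Xs, hXs, hlim⟩ := exists_isAdmissible_tendsto_packingConst d K
  obtain ⟨X, hnear, hdens⟩ :=
    exists_glued_centers hd (zero_le_one.trans (le_max_left 1 (sSup K))) Xs
  have hX : IsAdmissible d K X := isAdmissible_of_mem_same_or_lt_dist hXs hnear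
  exact ⟨X, hX, (dens_le_packingConst hX).antisymm (hlim.limsup_eq ▸ hdens)⟩

/-- Existence of optimal packings (Proposition `prop:existence`): if `K` is compact
with `1 ∈ K`, then some `K`-admissible sphere packing attains `Δ_d(K)`. -/
theorem exists_optimal_packing
    (d : ℕ) (hd : 1 ≤ d)
    (K : Set ℝ) (hKc : IsCompact K) (hK1 : (1 : ℝ) ∈ K) (hKsub : K ⊆ Ici 1) :
    ∃ X : Set (Ed d), IsAdmissible d K X ∧ dens d X = packingConst d K :=
  exists_optimal_packing_general d hd K
end
end

section
/- Let d ≥ 1 and let K ⊆ [1,∞) be a compact set with 1 ∈ K. Then there exists a countable set K̃ ⊆ K with 1 ∈ K̃ and max K̃ = max K such that Δ_d(K̃) = Δ_d(K). -/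
open MeasureTheory Filter Set Metric FourierTransform
open scoped ENNReal

noncomputable section

/-! `Δ_d(K)` is already the supremum of the densities of some sequence of `K`-admissible
packings. Each packing has countably many centres, hence countably many distances, so only
countably many points of `K` occur as distances in these packings. Keeping those points together
with `1` and `max K` gives `K̃`: each packing of the sequence is still `K̃`-admissible, while every
`K̃`-admissible packing is `K`-admissible since `sup K̃ = sup K`. -/

namespace IsPackingCenters

variable {d : ℕ} {X : Set (Ed d)}

/-- The balls of radius `1/4` around the centres are disjoint and have positive volume. -/
lemma countable (hX : IsPackingCenters d X) : X.Countable := by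
  have h : {i : X | 0 < volume (ball (i : Ed d) (1 / 4))}.Countable := by
    refine Measure.countable_meas_pos_of_disjoint_iUnion (fun _ => measurableSet_ball) ?_
    intro i j hij
    have hdist : (1 : ℝ) ≤ dist (i : Ed d) j := hX i.2 j.2 (Subtype.coe_ne_coe.mpr hij)
    exact ball_disjoint_ball (by linarith)
  simp only [measure_ball_pos volume _ (by norm_num : (0 : ℝ) < 1 / 4), ofPred_true] at h
  exact countable_coe_iff.mp (countable_univ_iff.mp h)

lemma countable_image2_dist (hX : IsPackingCenters d X) : (image2 dist X X).Countable :=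
  hX.countable.image2 hX.countable _

end IsPackingCenters

namespace IsAdmissible

variable {d : ℕ} {K K' : Set ℝ} {X : Set (Ed d)}

lemma of_subset (hsub : K' ⊆ K) (hsup : sSup K' = sSup K) (hX : IsAdmissible d K' X) :
    IsAdmissible d K X := by
  refine ⟨hX.1, fun x hx y hy => ?_⟩
  rw [← hsup]
  rcases hX.2 x hx y hy with h | h | h
  exacts [Or.inl h, Or.inr (Or.inl (hsub h)), Or.inr (Or.inr h)]

lemma of_dist_mem (hsup : sSup K' = sSup K) (hX : IsAdmissible d K X)
    (hdist : K ∩ image2 dist X X ⊆ K') : IsAdmissible d K' X := by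
  refine ⟨hX.1, fun x hx y hy => ?_⟩
  rw [hsup]
  rcases hX.2 x hx y hy with h | h | h
  exacts [Or.inl h, Or.inr (Or.inl (hdist ⟨h, mem_image2_of_mem hx hy⟩)), Or.inr (Or.inr h)]

end IsAdmissible

lemma packingConst_mono_of_sSup_eq {d : ℕ} {K K' : Set ℝ} (hsub : K' ⊆ K)
    (hsup : sSup K' = sSup K) : packingConst d K' ≤ packingConst d K :=
  iSup₂_le fun X hX => le_iSup₂_of_le X (hX.of_subset hsub hsup) le_rfl

lemma exists_seq_isAdmissible_iSup_dens_eq (d : ℕ) (K : Set ℝ) :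
    ∃ X : ℕ → Set (Ed d), (∀ n, IsAdmissible d K (X n)) ∧
      ⨆ n, dens d (X n) = packingConst d K := by
  set S := dens d '' {X | IsAdmissible d K X}
  have hS : S.Nonempty := ⟨dens d ∅, ∅, ⟨pairwise_empty _, by simp⟩, rfl⟩
  obtain ⟨u, hu_mono, hu_tendsto, hu_mem⟩ := exists_seq_tendsto_sSup hS (OrderTop.bddAbove S)
  choose X hX hXu using hu_mem
  refine ⟨X, hX, ?_⟩
  simp only [hXu]
  rw [iSup_eq_of_tendsto hu_mono hu_tendsto, sSup_image]
  rfl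

lemma exists_countable_packingConst_eq (d : ℕ) (K : Set ℝ) :
    ∃ C : Set ℝ, C.Countable ∧ ∀ K' ⊆ K, K ∩ C ⊆ K' → sSup K' = sSup K →
      packingConst d K' = packingConst d K := by
  obtain ⟨X, hX, hsup⟩ := exists_seq_isAdmissible_iSup_dens_eq d K
  refine ⟨⋃ n, image2 dist (X n) (X n), countable_iUnion fun n => (hX n).1.countable_image2_dist,
    fun K' hsub hC hsup' => le_antisymm (packingConst_mono_of_sSup_eq hsub hsup') ?_⟩
  rw [← hsup]
  refine iSup_le fun n => le_iSup₂_of_le (X n) ((hX n).of_dist_mem hsup' ?_) le_rfl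
  exact (inter_subset_inter_right K (subset_iUnion _ n)).trans hC

theorem countable_subset_same_packing_const_general
    (d : ℕ)
    (K : Set ℝ) (hKc : IsCompact K) (hK1 : (1 : ℝ) ∈ K) :
    ∃ Kt : Set ℝ, Kt.Countable ∧ Kt ⊆ K ∧ (1 : ℝ) ∈ Kt ∧
      sSup K ∈ Kt ∧ sSup Kt = sSup K ∧
      packingConst d Kt = packingConst d K := by
  obtain ⟨C, hC, hKC⟩ := exists_countable_packingConst_eq d K
  have hmax : sSup K ∈ K := hKc.sSup_mem ⟨1, hK1⟩
  set Kt := insert 1 (insert (sSup K) (K ∩ C))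
  have hsub : Kt ⊆ K := insert_subset hK1 (insert_subset hmax inter_subset_left)
  have hsup : sSup Kt = sSup K :=
    IsGreatest.csSup_eq ⟨by simp [Kt], fun x hx => le_csSup hKc.bddAbove (hsub hx)⟩
  refine ⟨Kt, (hC.mono inter_subset_right).insert _ |>.insert _, hsub, by simp [Kt],
    by simp [Kt], hsup, hKC Kt hsub ?_ hsup⟩
  exact (subset_insert _ _).trans (subset_insert _ _)

/-- Lemma `lem:enumerableK`: for compact `K` there is a countable subset `K̃ ⊆ K`,
containing `1` and with the same maximum, such that `Δ_d(K̃) = Δ_d(K)`. -/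
theorem countable_subset_same_packing_const
    (d : ℕ) (hd : 1 ≤ d)
    (K : Set ℝ) (hKc : IsCompact K) (hK1 : (1 : ℝ) ∈ K) (hKsub : K ⊆ Ici 1) :
    ∃ Kt : Set ℝ, Kt.Countable ∧ Kt ⊆ K ∧ (1 : ℝ) ∈ Kt ∧
      sSup K ∈ Kt ∧ sSup Kt = sSup K ∧
      packingConst d Kt = packingConst d K :=
  countable_subset_same_packing_const_general d K hKc hK1
end
end

section
/- Let K ⊆ [1,∞) be a finite set with 1 ∈ K. Then there exists a periodic K-admissible sphere packing P of ℝ such that dens(P) = Δ_1(K). -/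
open MeasureTheory Filter Set Metric FourierTransform
open scoped ENNReal

noncomputable section

open Topology

/-!
At each point `x` of a `K`-admissible packing of `ℝ`, record the set of distances below
`M = sSup K` back to earlier points. It is a subset of `K`, and the state at the next point is
determined by the current state and the gap between them, with all gaps `≥ M` acting alike. So
the gap sequence of any admissible packing is a run of a finite automaton, and conversely every
cycle of that automaton, repeated periodically, gives an admissible periodic packing. Cutting loops
out of a run shows that a run of `n` gaps of total length `s` satisfies `n ≤ ρ s + C`, where `ρ` is
the largest ratio (number of gaps) / (total length) over the finitely many short cycles; hence
every admissible packing has density at most `ρ`, and the periodic packing of an optimal cycle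
has density exactly `ρ`.
-/

/-! ### Cycle means of finite automata -/

namespace DFA

variable {α σ : Type*} (M : DFA α σ)

theorem evalFrom_flatten_replicate {s : σ} {x : List α} (hx : M.evalFrom s x = s) (n : ℕ) :
    M.evalFrom s (List.replicate n x).flatten = s := by
  induction n with
  | zero => rfl
  | succ n ih => rw [List.replicate_succ, List.flatten_cons, evalFrom_of_append, hx, ih]

variable (hclosed : ∀ q a, M.step q a ∈ M.accept → q ∈ M.accept)
include hclosed

theorem mem_accept_of_evalFrom_mem {q : σ} {x : List α} (h : M.evalFrom q x ∈ M.accept) :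
    q ∈ M.accept := by
  induction x generalizing q with
  | nil => exact h
  | cons a x ih => exact hclosed q a (ih h)

variable [Fintype σ] (w : α → ℝ)

theorem length_le_of_forall_short_cycle (hw : ∀ a, 0 ≤ w a) {ρ : ℝ} (hρ : 0 ≤ ρ)
    (hcycle : ∀ q ∈ M.accept, ∀ b ≠ [], b.length ≤ Fintype.card σ → M.evalFrom q b = q →
      (b.length : ℝ) ≤ ρ * (b.map w).sum)
    {s : σ} {x : List α} (hx : M.evalFrom s x ∈ M.accept) :
    (x.length : ℝ) ≤ ρ * (x.map w).sum + Fintype.card σ := by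
  induction h : x.length using Nat.strong_induction_on generalizing x with
  | _ n ih =>
  subst h
  by_cases hshort : x.length < Fintype.card σ
  · have hsum : 0 ≤ (x.map w).sum := List.sum_nonneg (by simpa using fun a _ => hw a)
    have : (x.length : ℝ) ≤ Fintype.card σ := by exact_mod_cast hshort.le
    nlinarith
  obtain ⟨q, a, b, c, rfl, hab, hb, rfl, hq, hc⟩ := M.evalFrom_split (not_lt.1 hshort) rfl
  have hac : M.evalFrom s (a ++ c) ∈ M.accept := by rwa [evalFrom_of_append, hc]
  have hb_pos := List.length_pos_iff.2 hb
  have h_ac := ih _ (by simp only [List.length_append]; omega) hac rfl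
  have h_b := hcycle _ (M.mem_accept_of_evalFrom_mem hclosed (hc ▸ hx)) b hb (by omega) hq
  simp only [List.length_append, List.map_append, List.sum_append, Nat.cast_add] at h_ac h_b ⊢
  linarith

theorem exists_short_cycle {q : σ} (hq : q ∈ M.accept) {b : List α} (hb : b ≠ [])
    (hcyc : M.evalFrom q b = q) :
    ∃ q' ∈ M.accept, ∃ b' ≠ [], b'.length ≤ Fintype.card σ ∧ M.evalFrom q' b' = q' := by
  by_cases hshort : b.length ≤ Fintype.card σ
  · exact ⟨q, hq, b, hb, hshort, hcyc⟩
  obtain ⟨q', a, b', c, -, hab, hb', rfl, hq', hc⟩ := M.evalFrom_split (not_le.1 hshort).le hcyc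
  exact ⟨_, M.mem_accept_of_evalFrom_mem hclosed (hc ▸ hq), b', hb', by omega, hq'⟩

theorem exists_cycle_forall_length_le [Finite α] (hw : ∀ a, 0 < w a)
    {q₀ : σ} (hq₀ : q₀ ∈ M.accept) {b₀ : List α} (hb₀ : b₀ ≠ []) (hcyc₀ : M.evalFrom q₀ b₀ = q₀) :
    ∃ q ∈ M.accept, ∃ b ≠ [], M.evalFrom q b = q ∧
      ∀ s x, M.evalFrom s x ∈ M.accept →
        (x.length : ℝ) ≤ b.length / (b.map w).sum * (x.map w).sum + Fintype.card σ := by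
  have sum_pos : ∀ b : List α, b ≠ [] → 0 < (b.map w).sum := fun b hb =>
    List.sum_pos _ (by simpa using fun a _ => hw a) (by simpa using hb)
  set cycles := {p : σ × List α | p.1 ∈ M.accept ∧ p.2 ≠ [] ∧
    p.2.length ≤ Fintype.card σ ∧ M.evalFrom p.1 p.2 = p.1}
  have hfin : cycles.Finite :=
    (Set.finite_univ.prod (List.finite_length_le α (Fintype.card σ))).subset
      fun p hp => ⟨trivial, hp.2.2.1⟩
  obtain ⟨q', hq', b', hb', hlen', hcyc'⟩ := M.exists_short_cycle hclosed hq₀ hb₀ hcyc₀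
  obtain ⟨⟨q, b⟩, ⟨hq, hb, -, hcyc⟩, hmax⟩ := Set.exists_max_image cycles
    (fun p => (p.2.length : ℝ) / (p.2.map w).sum) hfin ⟨(q', b'), hq', hb', hlen', hcyc'⟩
  refine ⟨q, hq, b, hb, hcyc, fun s x hx => M.length_le_of_forall_short_cycle hclosed w
    (fun a => (hw a).le) (div_nonneg (Nat.cast_nonneg _) (sum_pos b hb).le) ?_ hx⟩
  intro q'' hq'' b'' hb'' hlen'' hcyc''
  have := hmax (q'', b'') ⟨hq'', hb'', hlen'', hcyc''⟩
  rwa [div_le_iff₀ (sum_pos b'' hb'')] at this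

end DFA

/-! ### The gap automaton -/

/-- Only distances strictly below `M` are recorded: the distance `M = sSup K` itself is always
admissible, and with this convention every gap `≥ M` empties the record. -/
def distStep (M : ℝ) (s : Set ℝ) (g : ℝ) : Set ℝ := {d | d < M ∧ (d = g ∨ d - g ∈ s)}

theorem sum_mem_foldl_distStep {M : ℝ} (s : Set ℝ) {v : List ℝ} (hv : v ≠ [])
    (hpos : ∀ a ∈ v, 0 < a) (hlt : v.sum < M) : v.sum ∈ v.foldl (distStep M) s := by
  induction v using List.reverseRecOn with
  | nil => exact absurd rfl hv
  | append_singleton v a ih =>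
    simp only [List.mem_append, List.mem_singleton] at hpos
    simp only [List.sum_append, List.sum_cons, List.sum_nil, add_zero] at hlt ⊢
    simp only [List.foldl_append, List.foldl_cons, List.foldl_nil]
    rcases eq_or_ne v [] with rfl | hv'
    · exact ⟨hlt, Or.inl (zero_add a)⟩
    · refine ⟨hlt, Or.inr ?_⟩
      rw [add_sub_cancel_right]
      exact ih hv' (fun b hb => hpos b (Or.inl hb)) (by linarith [hpos a (Or.inr rfl)])

def backDists (Y : Set ℝ) (M x : ℝ) : Set ℝ := {d | 0 < d ∧ d < M ∧ x - d ∈ Y}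

theorem distStep_backDists {Y : Set ℝ} {M x x' : ℝ} (hx : x ∈ Y) (hlt : x < x')
    (hgap : ∀ z ∈ Y, z ≤ x ∨ x' ≤ z) :
    distStep M (backDists Y M x) (min (x' - x) M) = backDists Y M x' := by
  ext d
  simp only [distStep, backDists, Set.mem_ofPred_eq]
  rcases lt_or_ge (x' - x) M with hg | hg
  · rw [min_eq_left hg.le]
    constructor
    · rintro ⟨hdM, rfl | ⟨hd, -, hdY⟩⟩
      · exact ⟨by linarith, hdM, by rwa [sub_sub_cancel]⟩
      · exact ⟨by linarith, hdM, by convert hdY using 1; ring⟩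
    · rintro ⟨hd, hdM, hdY⟩
      refine ⟨hdM, ?_⟩
      rcases (hgap _ hdY).resolve_right (by linarith) |>.eq_or_lt with h | h
      · exact Or.inl (by linarith)
      · exact Or.inr ⟨by linarith, by linarith, by convert hdY using 1; ring⟩
  · rw [min_eq_right hg]
    constructor
    · rintro ⟨hdM, rfl | ⟨hd, -⟩⟩ <;> linarith
    · rintro ⟨hd, hdM, hdY⟩
      rcases hgap _ hdY with h | h <;> linarith

open Classical in
/-- Reads the gaps of a packing from left to right (a gap `≥ sSup K` is read as `sSup K`),
recording the distances below `sSup K` back to earlier points; `none` is the dead state, reached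
once such a distance falls outside `K`. -/
def gapDFA (K : Set ℝ) : DFA K (Option (𝒫 K)) where
  step q g := q.bind fun s => if h : distStep (sSup K) s g ∈ 𝒫 K then some ⟨_, h⟩ else none
  start := some ⟨∅, Set.mem_powerset (Set.empty_subset K)⟩
  accept := {q | q ≠ none}

namespace gapDFA

variable {K : Set ℝ}

theorem mem_accept_of_step_mem_accept (q : Option (𝒫 K)) (a : K) :
    (gapDFA K).step q a ∈ (gapDFA K).accept → q ∈ (gapDFA K).accept := by
  rintro h rfl
  exact h rfl

theorem evalFrom_none (V : List K) : (gapDFA K).evalFrom none V = none := by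
  induction V with
  | nil => rfl
  | cons a V ih => exact ih

theorem step_some {s : 𝒫 K} {a : K} (h : distStep (sSup K) s a ∈ 𝒫 K) :
    (gapDFA K).step (some s) a = some ⟨_, h⟩ := by
  simp [gapDFA, h]

theorem evalFrom_start_sSup (hM : sSup K ∈ K) :
    (gapDFA K).evalFrom (gapDFA K).start [⟨sSup K, hM⟩] = (gapDFA K).start := by
  have hempty : distStep (sSup K) ∅ (sSup K) = ∅ := by
    ext d
    simp only [distStep, Set.mem_ofPred_eq, Set.mem_empty_iff_false, or_false, iff_false]
    rintro ⟨h, rfl⟩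
    exact lt_irrefl _ h
  have hmem : distStep (sSup K) ∅ (sSup K) ∈ 𝒫 K := by
    rw [hempty]
    exact Set.mem_powerset (Set.empty_subset K)
  rw [DFA.evalFrom_singleton]
  exact (step_some hmem).trans (congrArg some (Subtype.ext hempty))

theorem coe_eq_foldl_of_evalFrom_eq_some {s t : 𝒫 K} {V : List K}
    (h : (gapDFA K).evalFrom (some s) V = some t) :
    (t : Set ℝ) = (V.map Subtype.val).foldl (distStep (sSup K)) s := by
  induction V generalizing s with
  | nil => exact congrArg Subtype.val (Option.some_injective _ h).symm
  | cons a V ih =>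
    by_cases ha : distStep (sSup K) s a ∈ 𝒫 K
    · rw [DFA.evalFrom_cons, step_some ha] at h
      exact ih h
    · have hnone : (gapDFA K).step (some s) a = none := by simp [gapDFA, ha]
      rw [DFA.evalFrom_cons, hnone, evalFrom_none] at h
      cases h

theorem sum_mem_of_evalFrom_mem_accept (hK : K ⊆ Ioi 0) {q : Option (𝒫 K)} {V : List K}
    (h : (gapDFA K).evalFrom q V ∈ (gapDFA K).accept) (hV : V ≠ [])
    (hlt : (V.map Subtype.val).sum < sSup K) : (V.map Subtype.val).sum ∈ K := by
  obtain ⟨s, rfl⟩ := Option.ne_none_iff_exists'.1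
    ((gapDFA K).mem_accept_of_evalFrom_mem mem_accept_of_step_mem_accept h)
  obtain ⟨t, ht⟩ := Option.ne_none_iff_exists'.1 h
  refine t.2 ?_
  rw [coe_eq_foldl_of_evalFrom_eq_some ht]
  exact sum_mem_foldl_distStep _ (List.map_eq_nil_iff.not.2 hV)
    (List.forall_mem_map.2 fun a _ => hK a.2) hlt

theorem sub_mem_of_evalFrom_mem_accept (hK : K ⊆ Ioi 0)
    {q : Option (𝒫 K)} {B : List K} (hB : (gapDFA K).evalFrom q B ∈ (gapDFA K).accept)
    {i i' : ℕ} (hii' : i < i') (hi' : i' ≤ B.length)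
    (hlt : ((B.map Subtype.val).take i').sum - ((B.map Subtype.val).take i).sum < sSup K) :
    ((B.map Subtype.val).take i').sum - ((B.map Subtype.val).take i).sum ∈ K := by
  have hV : (B.take i').drop i ≠ [] := by
    rw [← List.length_pos_iff, List.length_drop, List.length_take]
    omega
  have hsum : (((B.take i').drop i).map Subtype.val).sum =
      ((B.map Subtype.val).take i').sum - ((B.map Subtype.val).take i).sum := by
    rw [List.map_drop, List.map_take, eq_sub_iff_add_eq',
      ← List.sum_take_add_sum_drop ((B.map Subtype.val).take i') i, List.take_take,
      min_eq_left hii'.le]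
  have hrun : (gapDFA K).evalFrom ((gapDFA K).evalFrom q (B.take i)) ((B.take i').drop i) ∈
      (gapDFA K).accept := by
    have hsplit : B.take i ++ (B.take i').drop i = B.take i' := by
      conv_rhs => rw [← List.take_append_drop i (B.take i')]
      rw [List.take_take, min_eq_left hii'.le]
    rw [← DFA.evalFrom_of_append, hsplit]
    refine (gapDFA K).mem_accept_of_evalFrom_mem mem_accept_of_step_mem_accept (x := B.drop i') ?_
    rwa [← DFA.evalFrom_of_append, List.take_append_drop]
  rw [← hsum] at hlt ⊢
  exact sum_mem_of_evalFrom_mem_accept hK hrun hV hlt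

theorem exists_cycle_forall_length_le (hKfin : K.Finite) (hK : K ⊆ Ici 1) (hM : sSup K ∈ K) :
    ∃ q ∈ (gapDFA K).accept, ∃ b ≠ [], (gapDFA K).evalFrom q b = q ∧ ∃ C : ℝ, 0 ≤ C ∧
      ∀ q' (W : List K), (gapDFA K).evalFrom q' W ∈ (gapDFA K).accept →
        (W.length : ℝ) ≤ b.length / (b.map Subtype.val).sum * (W.map Subtype.val).sum + C := by
  have : Finite K := hKfin.to_subtype
  have : Fintype (𝒫 K) := hKfin.powerset.fintype
  obtain ⟨q, hq, b, hb, hcyc, hbound⟩ := (gapDFA K).exists_cycle_forall_length_le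
    mem_accept_of_step_mem_accept Subtype.val (fun a => zero_lt_one.trans_le (hK a.2))
    (Option.some_ne_none _) (List.cons_ne_nil _ []) (evalFrom_start_sSup hM)
  exact ⟨q, hq, b, hb, hcyc, _, Nat.cast_nonneg _, hbound⟩

end gapDFA

/-! ### Admissible sets on the line -/

theorem Set.Pairwise.finite_inter_Icc {Y : Set ℝ} (hY : Y.Pairwise fun x y => 1 ≤ dist x y)
    (a b : ℝ) : (Y ∩ Icc a b).Finite := by
  refine ((Set.finite_Icc ⌊a⌋ ⌊b⌋).subset ?_).of_finite_image (f := Int.floor) ?_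
  · rintro _ ⟨x, ⟨-, hxa, hxb⟩, rfl⟩
    exact ⟨Int.floor_le_floor hxa, Int.floor_le_floor hxb⟩
  · intro x hx y hy hxy
    by_contra hne
    have : 1 ≤ dist x y := hY hx.1 hy.1 hne
    rw [Real.dist_eq] at this
    linarith [Int.abs_sub_lt_one_of_floor_eq_floor hxy]

theorem pairwise_one_le_dist_of_forall_dist_mem {K Y : Set ℝ} (hK : K ⊆ Ici 1) (hM : sSup K ∈ K)
    (hY : ∀ x ∈ Y, ∀ y ∈ Y, dist x y ∈ insert (0 : ℝ) (K ∪ Ioi (sSup K))) :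
    Y.Pairwise fun x y => 1 ≤ dist x y := by
  intro x hx y hy hne
  rcases hY x hx y hy with h | h | h
  · exact absurd (dist_eq_zero.1 h) hne
  · exact hK h
  · exact (hK hM).trans h.le

theorem volume_biUnion_closedBall_inter_Icc_le {Y : Set ℝ} {r a b : ℝ}
    (hfin : (Y ∩ Icc (a - r) (b + r)).Finite) :
    volume ((⋃ y ∈ Y, closedBall y r) ∩ Icc a b) ≤
      hfin.toFinset.card * ENNReal.ofReal (2 * r) := by
  calc volume ((⋃ y ∈ Y, closedBall y r) ∩ Icc a b)
      ≤ volume (⋃ y ∈ hfin.toFinset, closedBall y r) := by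
        refine measure_mono fun z ⟨hz, hza, hzb⟩ => ?_
        obtain ⟨y, hy, hzy⟩ := Set.mem_iUnion₂.1 hz
        rw [mem_closedBall, Real.dist_eq, abs_le] at hzy
        refine Set.mem_biUnion (hfin.mem_toFinset.2 ⟨hy, by linarith, by linarith⟩) ?_
        rw [mem_closedBall, Real.dist_eq, abs_le]
        exact hzy
    _ ≤ ∑ y ∈ hfin.toFinset, volume (closedBall y r) := measure_biUnion_finset_le _ _
    _ = hfin.toFinset.card * ENNReal.ofReal (2 * r) := by
        simp [Real.volume_closedBall]

theorem le_volume_biUnion_closedBall_inter_Icc {Y : Set ℝ} {r a b : ℝ} {F : Finset ℝ}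
    (hFY : ↑F ⊆ Y) (hF : (F : Set ℝ).Pairwise fun x y => 2 * r ≤ dist x y)
    (hFab : ↑F ⊆ Icc (a + r) (b - r)) :
    F.card * ENNReal.ofReal (2 * r) ≤ volume ((⋃ y ∈ Y, closedBall y r) ∩ Icc a b) := by
  calc (F.card : ℝ≥0∞) * ENNReal.ofReal (2 * r) = ∑ y ∈ F, volume (ball y r) := by
        simp [Real.volume_ball]
    _ = volume (⋃ y ∈ F, ball y r) := by
        refine (measure_biUnion_finset (fun x hx y hy hxy => ?_)
          fun y _ => measurableSet_ball).symm
        exact Metric.ball_disjoint_ball (by linarith [hF hx hy hxy])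
    _ ≤ volume ((⋃ y ∈ Y, closedBall y r) ∩ Icc a b) := by
        refine measure_mono fun z hz => ?_
        obtain ⟨y, hy, hzy⟩ := Set.mem_iUnion₂.1 hz
        have hyab := hFab hy
        rw [mem_ball, Real.dist_eq, abs_lt] at hzy
        refine ⟨Set.mem_biUnion (hFY hy) (ball_subset_closedBall ?_), by linarith [hyab.1],
          by linarith [hyab.2]⟩
        rw [mem_ball, Real.dist_eq, abs_lt]
        exact hzy

theorem Finset.coe_eq_inter_Icc_min'_max' {Y : Set ℝ} {F : Finset ℝ} {a b : ℝ}
    (hF : ↑F = Y ∩ Set.Icc a b) (hne : F.Nonempty) :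
    ↑F = Y ∩ Set.Icc (F.min' hne) (F.max' hne) := by
  have hmem : ∀ {z}, z ∈ F ↔ z ∈ Y ∩ Set.Icc a b := by intro z; rw [← Finset.mem_coe, hF]
  ext z
  refine ⟨fun hz => ⟨(hmem.1 hz).1, F.min'_le z hz, F.le_max' z hz⟩, fun ⟨hzY, hzu, hzv⟩ => ?_⟩
  exact hmem.2 ⟨hzY, (hmem.1 (F.min'_mem hne)).2.1.trans hzu,
    hzv.trans (hmem.1 (F.max'_mem hne)).2.2⟩

theorem Finset.coe_eq_inter_Icc_of_coe_insert {Y : Set ℝ} {s : Finset ℝ} {u v m : ℝ}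
    (hlt : ∀ x ∈ s, x < v) (hF : ↑(insert v s) = Y ∩ Set.Icc u v) (hm : m ∈ s)
    (hmax : ∀ x ∈ s, x ≤ m) : ↑s = Y ∩ Set.Icc u m ∧ ∀ z ∈ Y, z ≤ m ∨ v ≤ z := by
  have hmem : ∀ {z}, z ∈ insert v s ↔ z ∈ Y ∩ Set.Icc u v := by intro z; rw [← Finset.mem_coe, hF]
  have hmv := hlt m hm
  have hum := (hmem.1 (Finset.mem_insert_of_mem hm)).2.1
  have mem_of : ∀ {z}, z ∈ Y → u ≤ z → z < v → z ∈ s := fun hzY hzu hzv =>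
    (Finset.mem_insert.1 (hmem.2 ⟨hzY, hzu, hzv.le⟩)).resolve_left hzv.ne
  refine ⟨Set.ext fun z => ⟨fun hz => ?_, fun ⟨hzY, hzu, hzm⟩ => mem_of hzY hzu (by linarith)⟩,
    fun z hz => ?_⟩
  · have := hmem.1 (Finset.mem_insert_of_mem hz)
    exact ⟨this.1, this.2.1, hmax z hz⟩
  · by_contra! h
    exact absurd (hmax z (mem_of hz (by linarith) h.2)) (not_le.2 h.1)

def stateAt (K Y : Set ℝ) (x : ℝ) : Option (𝒫 K) :=
  open Classical in if h : backDists Y (sSup K) x ∈ 𝒫 K then some ⟨_, h⟩ else none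

section AdmissibleLine

variable {K Y : Set ℝ} (hY : ∀ x ∈ Y, ∀ y ∈ Y, dist x y ∈ insert (0 : ℝ) (K ∪ Ioi (sSup K)))
include hY

theorem sub_mem_of_le_sSup {x y : ℝ} (hx : x ∈ Y) (hy : y ∈ Y) (hxy : y < x)
    (hle : x - y ≤ sSup K) : x - y ∈ K := by
  have h := hY x hx y hy
  rw [Real.dist_eq, abs_of_pos (sub_pos.2 hxy)] at h
  rcases h with h | h | h
  · linarith
  · exact h
  · exact absurd hle (not_le.2 h)

theorem backDists_mem_powerset {x : ℝ} (hx : x ∈ Y) : backDists Y (sSup K) x ∈ 𝒫 K := by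
  rintro d ⟨hd, hdM, hdY⟩
  have := sub_mem_of_le_sSup hY hx hdY (by linarith) (by linarith)
  rwa [sub_sub_cancel] at this

theorem stateAt_eq {x : ℝ} (hx : x ∈ Y) :
    stateAt K Y x = some ⟨_, backDists_mem_powerset hY hx⟩ :=
  dif_pos _

theorem stateAt_mem_accept {x : ℝ} (hx : x ∈ Y) : stateAt K Y x ∈ (gapDFA K).accept := by
  rw [stateAt_eq hY hx]
  exact Option.some_ne_none _

variable (hM : sSup K ∈ K)
include hM

theorem exists_step_stateAt {x x' : ℝ} (hx : x ∈ Y) (hx' : x' ∈ Y) (hlt : x < x')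
    (hgap : ∀ z ∈ Y, z ≤ x ∨ x' ≤ z) :
    ∃ a : K, (a : ℝ) ≤ x' - x ∧ (gapDFA K).step (stateAt K Y x) a = stateAt K Y x' := by
  have ha : min (x' - x) (sSup K) ∈ K := by
    rcases min_choice (x' - x) (sSup K) with h | h <;> rw [h]
    · exact sub_mem_of_le_sSup hY hx' hx hlt (h ▸ min_le_right _ _)
    · exact hM
  refine ⟨⟨_, ha⟩, min_le_left _ _, ?_⟩
  have hstep := distStep_backDists (M := sSup K) hx hlt hgap
  have hmem : distStep (sSup K) (backDists Y (sSup K) x) (min (x' - x) (sSup K)) ∈ 𝒫 K := by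
    rw [hstep]
    exact backDists_mem_powerset hY hx'
  rw [stateAt_eq hY hx, stateAt_eq hY hx', gapDFA.step_some hmem]
  exact congrArg some (Subtype.ext hstep)

theorem exists_gapWord (F : Finset ℝ) :
    ∀ u v, ↑F = Y ∩ Icc u v → u ∈ F → v ∈ F → ∃ W : List K,
      (gapDFA K).evalFrom (stateAt K Y u) W = stateAt K Y v ∧
        (W.map Subtype.val).sum ≤ v - u ∧ W.length + 1 = F.card := by
  induction F using Finset.induction_on_max with
  | empty => simp
  | insert a s hlt ih =>
    intro u v hF hu hv
    have hmem : ∀ {z}, z ∈ insert a s ↔ z ∈ Y ∩ Icc u v := by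
      intro z; rw [← Finset.mem_coe, hF]
    have ha := hmem.1 (Finset.mem_insert_self a s)
    obtain rfl : v = a := (Finset.mem_insert.1 hv).resolve_right fun h =>
      absurd ha.2.2 (not_le.2 (hlt v h))
    rcases s.eq_empty_or_nonempty with rfl | hs
    · obtain rfl : u = v := Finset.mem_singleton.1 hu
      exact ⟨[], rfl, by simp, rfl⟩
    have hm := s.max'_mem hs
    obtain ⟨hs_eq, hgap⟩ :=
      Finset.coe_eq_inter_Icc_of_coe_insert hlt hF hm fun x hx => s.le_max' x hx
    have hm' := hmem.1 (Finset.mem_insert_of_mem hm)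
    have hu_s : u ∈ s := (Finset.mem_insert.1 hu).resolve_left (hm'.2.1.trans_lt (hlt _ hm)).ne
    obtain ⟨W, hW, hsum, hlen⟩ := ih u _ hs_eq hu_s hm
    obtain ⟨g, hg, hstep⟩ := exists_step_stateAt hY hM hm'.1 ha.1 (hlt _ hm) hgap
    refine ⟨W ++ [g], by rw [DFA.evalFrom_append_singleton, hW, hstep], ?_, ?_⟩
    · simp only [List.map_append, List.sum_append, List.map_cons, List.map_nil, List.sum_cons,
        List.sum_nil, add_zero]
      linarith
    · rw [List.length_append, List.length_singleton, Finset.card_insert_of_notMem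
        (fun h => lt_irrefl _ (hlt v h)), ← hlen]

theorem card_le_of_coe_eq_inter_Icc {ρ C : ℝ} (hρ : 0 ≤ ρ) (hC : 0 ≤ C)
    (hbound : ∀ q (W : List K), (gapDFA K).evalFrom q W ∈ (gapDFA K).accept →
      (W.length : ℝ) ≤ ρ * (W.map Subtype.val).sum + C)
    {a b : ℝ} (hab : a ≤ b) {F : Finset ℝ} (hF : ↑F = Y ∩ Icc a b) :
    (F.card : ℝ) ≤ ρ * (b - a) + C + 1 := by
  rcases F.eq_empty_or_nonempty with rfl | hne
  · rw [Finset.card_empty, Nat.cast_zero]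
    nlinarith
  have hmem : ∀ {z}, z ∈ F → z ∈ Y ∩ Icc a b := fun hz => hF ▸ Finset.mem_coe.2 hz
  obtain ⟨W, hW, hsum, hlen⟩ := exists_gapWord hY hM F _ _
    (F.coe_eq_inter_Icc_min'_max' hF hne) (F.min'_mem hne) (F.max'_mem hne)
  have hW_len := hbound _ W (hW ▸ stateAt_mem_accept hY (hmem (F.max'_mem hne)).1)
  have hspan : F.max' hne - F.min' hne ≤ b - a := by
    linarith [(hmem (F.min'_mem hne)).2.1, (hmem (F.max'_mem hne)).2.2]
  have : (F.card : ℝ) = W.length + 1 := by exact_mod_cast hlen.symm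
  nlinarith

theorem volume_biUnion_closedBall_inter_Icc_le_of_bound {ρ C : ℝ} (hρ : 0 ≤ ρ) (hC : 0 ≤ C)
    (hsep : Y.Pairwise fun x y => 1 ≤ dist x y)
    (hbound : ∀ q (W : List K), (gapDFA K).evalFrom q W ∈ (gapDFA K).accept →
      (W.length : ℝ) ≤ ρ * (W.map Subtype.val).sum + C)
    {t : ℝ} (ht : 0 ≤ t) :
    volume ((⋃ y ∈ Y, closedBall y 2⁻¹) ∩ Icc (-(t / 2)) (t / 2)) ≤
      ENNReal.ofReal (ρ * t + (ρ + C + 1)) := by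
  have hfin := hsep.finite_inter_Icc (-(t / 2) - 2⁻¹) (t / 2 + 2⁻¹)
  have hcard := card_le_of_coe_eq_inter_Icc hY hM hρ hC hbound (by linarith) hfin.coe_toFinset
  refine (volume_biUnion_closedBall_inter_Icc_le hfin).trans ?_
  rw [show (2 : ℝ) * 2⁻¹ = 1 by norm_num, ENNReal.ofReal_one, mul_one, ← ENNReal.ofReal_natCast]
  exact ENNReal.ofReal_le_ofReal (by linarith)

end AdmissibleLine

/-! ### Periodic sets -/

def periodicSet (L : ℝ) (P : Finset ℝ) : Set ℝ := {x | ∃ k : ℤ, ∃ p ∈ P, x = k * L + p}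

theorem injOn_intCast_mul_add {L : ℝ} {P : Set ℝ} (hP : P ⊆ Ico 0 L) :
    Set.InjOn (fun q : ℤ × ℝ => q.1 * L + q.2) (univ ×ˢ P) := by
  have lt_of_lt : ∀ {k k' : ℤ} {p p' : ℝ}, p ∈ P → p' ∈ P → k < k' →
      k * L + p < k' * L + p' := by
    intro k k' p p' hp hp' hkk'
    have h1 : (k : ℝ) + 1 ≤ k' := by exact_mod_cast hkk'
    obtain ⟨hp0, hpL⟩ := hP hp
    obtain ⟨hp'0, -⟩ := hP hp'
    nlinarith [mul_le_mul_of_nonneg_right h1 (hp0.trans hpL.le)]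
  rintro ⟨k, p⟩ ⟨-, hp⟩ ⟨k', p'⟩ ⟨-, hp'⟩ h
  simp only at h
  obtain rfl : k = k' := by
    by_contra hne
    rcases lt_or_gt_of_ne hne with hlt | hlt
    · exact (lt_of_lt hp hp' hlt).ne h
    · exact (lt_of_lt hp' hp hlt).ne h.symm
  simp_all

theorem exists_finset_subset_periodicSet {L : ℝ} {P : Finset ℝ} (hP : ↑P ⊆ Ico 0 L) (n : ℕ) :
    ∃ F : Finset ℝ, ↑F ⊆ periodicSet L P ∧ ↑F ⊆ Icc (-(n * L)) (n * L) ∧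
      F.card = 2 * n * P.card := by
  classical
  set D := Finset.Ico (-(n : ℤ)) n ×ˢ P
  have hinj : Set.InjOn (fun q : ℤ × ℝ => q.1 * L + q.2) D :=
    (injOn_intCast_mul_add hP).mono fun q hq =>
      Set.mem_prod.2 ⟨Set.mem_univ _, (Finset.mem_product.1 hq).2⟩
  refine ⟨D.image fun q => q.1 * L + q.2, ?_, ?_, ?_⟩
  · intro x hx
    obtain ⟨⟨k, p⟩, hq, rfl⟩ := Finset.mem_image.1 hx
    exact ⟨k, p, (Finset.mem_product.1 hq).2, rfl⟩
  · intro x hx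
    obtain ⟨⟨k, p⟩, hq, rfl⟩ := Finset.mem_image.1 hx
    obtain ⟨hk, hp⟩ := Finset.mem_product.1 hq
    obtain ⟨hk1, hk2⟩ := Finset.mem_Ico.1 hk
    have h1 : -(n : ℝ) ≤ k := by exact_mod_cast hk1
    have h2 : (k : ℝ) + 1 ≤ n := by exact_mod_cast hk2
    obtain ⟨hp0, hpL⟩ := hP hp
    constructor <;> nlinarith
  · rw [Finset.card_image_of_injOn hinj, Finset.card_product, Int.card_Ico, sub_neg_eq_add,
      ← two_mul, Int.toNat_mul (by norm_num) (by positivity)]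
    simp

theorem le_volume_periodicSet {L : ℝ} (hL : 0 < L) {P : Finset ℝ} (hP : ↑P ⊆ Ico 0 L)
    (hsep : (periodicSet L P).Pairwise fun x y => 1 ≤ dist x y) {t : ℝ} (ht : 1 ≤ t) :
    ENNReal.ofReal (P.card / L * t - (P.card / L + 2 * P.card)) ≤
      volume ((⋃ y ∈ periodicSet L P, closedBall y 2⁻¹) ∩ Icc (-(t / 2)) (t / 2)) := by
  set n := ⌊(t - 1) / (2 * L)⌋₊
  have hn : n * L ≤ (t - 1) / 2 := by
    have := Nat.floor_le (a := (t - 1) / (2 * L)) (by positivity)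
    rw [le_div_iff₀ (by positivity)] at this
    linarith
  have hn' : (t - 1) / (2 * L) < n + 1 := Nat.lt_floor_add_one _
  rw [div_lt_iff₀ (by positivity)] at hn'
  obtain ⟨F, hFY, hFI, hcard⟩ := exists_finset_subset_periodicSet hP n
  have hvol := le_volume_biUnion_closedBall_inter_Icc (r := 2⁻¹) (a := -(t / 2)) (b := t / 2)
    hFY ((hsep.mono hFY).imp fun _ _ h => (by norm_num : (2 : ℝ) * 2⁻¹ = 1).trans_le h)
    (hFI.trans (Set.Icc_subset_Icc (by linarith) (by linarith)))
  rw [show (2 : ℝ) * 2⁻¹ = 1 by norm_num, ENNReal.ofReal_one, mul_one, hcard] at hvol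
  refine le_trans ?_ hvol
  rw [← ENNReal.ofReal_natCast]
  refine ENNReal.ofReal_le_ofReal ?_
  have hc : (0 : ℝ) ≤ P.card := Nat.cast_nonneg _
  have : (P.card : ℝ) / L * t - (P.card / L + 2 * P.card) = P.card * (t - 1 - 2 * L) / L := by
    field_simp
    ring
  rw [this, div_le_iff₀ hL]
  push_cast
  nlinarith [mul_le_mul_of_nonneg_left hn'.le hc]

theorem strictMonoOn_sum_take {l : List ℝ} (hl : ∀ a ∈ l, 0 < a) :
    StrictMonoOn (fun i => (l.take i).sum) (Iic l.length) := by
  intro i _ j hj hij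
  simp only
  rw [← List.sum_take_add_sum_drop (l.take j) i, List.take_take, min_eq_left hij.le]
  have hne : (l.take j).drop i ≠ [] := by
    rw [← List.length_pos_iff, List.length_drop, List.length_take]
    rw [Set.mem_Iic] at hj
    omega
  linarith [List.sum_pos _ (fun a ha => hl a (List.mem_of_mem_take (List.mem_of_mem_drop ha))) hne]

theorem sum_take_flatten_replicate (l : List ℝ) {c r j : ℕ} (hcr : c < r) (hj : j ≤ l.length) :
    ((List.replicate r l).flatten.take (c * l.length + j)).sum = c * l.sum + (l.take j).sum := by
  induction c generalizing r with
  | zero =>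
    obtain ⟨r, rfl⟩ := Nat.exists_eq_add_of_lt hcr
    simp [List.replicate_succ, List.take_append, Nat.sub_eq_zero_of_le hj]
  | succ c ih =>
    obtain ⟨r, rfl⟩ := Nat.exists_eq_add_of_lt hcr
    rw [List.replicate_succ, List.flatten_cons, List.take_append, List.sum_append,
      List.take_of_length_le (by nlinarith),
      show (c + 1) * l.length + j - l.length = c * l.length + j by rw [Nat.succ_mul]; omega,
      ih (by omega)]
    push_cast
    ring

def partialSums (l : List ℝ) : Finset ℝ := (Finset.range l.length).image fun j => (l.take j).sum

def periodicSetOfGaps (l : List ℝ) : Set ℝ := periodicSet l.sum (partialSums l)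

section PositiveGaps

variable {l : List ℝ} (hl : ∀ a ∈ l, 0 < a)
include hl

theorem partialSums_subset_Ico : ↑(partialSums l) ⊆ Ico 0 l.sum := by
  intro x hx
  obtain ⟨j, hj, rfl⟩ := Finset.mem_image.1 hx
  have hj : j < l.length := Finset.mem_range.1 hj
  have hmono := strictMonoOn_sum_take hl
  refine ⟨?_, ?_⟩
  · simpa using hmono.monotoneOn (Set.mem_Iic.2 (Nat.zero_le _)) (Set.mem_Iic.2 hj.le)
      (Nat.zero_le j)
  · simpa using hmono (Set.mem_Iic.2 hj.le) (Set.mem_Iic.2 le_rfl) hj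

theorem card_partialSums : (partialSums l).card = l.length := by
  rw [partialSums, Finset.card_image_of_injOn, Finset.card_range]
  exact (strictMonoOn_sum_take hl).injOn.mono fun j hj =>
    Set.mem_Iic.2 (Finset.mem_range.1 hj).le

theorem exists_eq_sub_of_mem_periodicSetOfGaps {x y : ℝ} (hx : x ∈ periodicSetOfGaps l)
    (hy : y ∈ periodicSetOfGaps l) (hxy : y < x) :
    ∃ c i i' : ℕ, i < i' ∧ i' ≤ (c + 1) * l.length ∧
      x - y = ((List.replicate (c + 1) l).flatten.take i').sum -
        ((List.replicate (c + 1) l).flatten.take i).sum := by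
  obtain ⟨k', _, hp', rfl⟩ := hx
  obtain ⟨k, _, hp, rfl⟩ := hy
  obtain ⟨j', hj', rfl⟩ := Finset.mem_image.1 hp'
  obtain ⟨j, hj, rfl⟩ := Finset.mem_image.1 hp
  have hj := Finset.mem_range.1 hj
  have hj' := Finset.mem_range.1 hj'
  obtain ⟨-, hlt'⟩ := partialSums_subset_Ico hl hp'
  obtain ⟨hnn, hlt⟩ := partialSums_subset_Ico hl hp
  have hkk' : k ≤ k' := by
    by_contra! h
    have h1 : (k' : ℝ) + 1 ≤ k := by exact_mod_cast h
    nlinarith [mul_le_mul_of_nonneg_right h1 (hnn.trans hlt.le)]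
  obtain ⟨c, hc⟩ := Int.eq_ofNat_of_zero_le (sub_nonneg.2 hkk')
  have hc' : (k' : ℝ) - k = c := by exact_mod_cast hc
  set G := (List.replicate (c + 1) l).flatten
  have hx' := sum_take_flatten_replicate l (Nat.lt_succ_self c) hj'.le
  have hy' := sum_take_flatten_replicate l (c := 0) (Nat.succ_pos c) hj.le
  rw [Nat.cast_zero, zero_mul, zero_add, zero_mul, zero_add] at hy'
  have hdiff : k' * l.sum + (l.take j').sum - (k * l.sum + (l.take j).sum) =
      (G.take (c * l.length + j')).sum - (G.take j).sum := by
    rw [hx', hy', ← hc']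
    ring
  refine ⟨c, j, c * l.length + j', ?_, by rw [Nat.succ_mul]; omega, hdiff⟩
  by_contra! hle
  have hG : ∀ a ∈ G, 0 < a := by simpa [G] using hl
  have hlen : G.length = (c + 1) * l.length := by simp [G]
  have := (strictMonoOn_sum_take hG).monotoneOn (Set.mem_Iic.2 (by rw [hlen, Nat.succ_mul]; omega))
    (Set.mem_Iic.2 (by rw [hlen, Nat.succ_mul]; omega)) hle
  linarith

end PositiveGaps

theorem forall_dist_mem_periodicSetOfGaps_of_cycle {K : Set ℝ} (hK : K ⊆ Ici 1) (hM : sSup K ∈ K)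
    {q : Option (𝒫 K)} (hq : q ∈ (gapDFA K).accept) {b : List K}
    (hcyc : (gapDFA K).evalFrom q b = q) :
    ∀ x ∈ periodicSetOfGaps (b.map Subtype.val), ∀ y ∈ periodicSetOfGaps (b.map Subtype.val),
      dist x y ∈ insert (0 : ℝ) (K ∪ Ioi (sSup K)) := by
  have hpos : ∀ a ∈ b.map Subtype.val, 0 < a := by
    simpa using fun a ha _ => zero_lt_one.trans_le (hK ha)
  have key : ∀ x ∈ periodicSetOfGaps (b.map Subtype.val),
      ∀ y ∈ periodicSetOfGaps (b.map Subtype.val), y < x → x - y ∈ K ∪ Ioi (sSup K) := by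
    intro x hx y hy hxy
    obtain ⟨c, i, i', hii', hi', hxy_eq⟩ := exists_eq_sub_of_mem_periodicSetOfGaps hpos hx hy hxy
    set B := (List.replicate (c + 1) b).flatten
    have hB : (List.replicate (c + 1) (b.map Subtype.val)).flatten = B.map Subtype.val := by
      simp [B, List.map_flatten, List.map_replicate]
    rw [hB] at hxy_eq
    rcases lt_or_ge (x - y) (sSup K) with hlt | hge
    · have hB_acc : (gapDFA K).evalFrom q B ∈ (gapDFA K).accept := by
        rwa [(gapDFA K).evalFrom_flatten_replicate hcyc]
      rw [hxy_eq] at hlt ⊢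
      exact Or.inl (gapDFA.sub_mem_of_evalFrom_mem_accept
        (fun a ha => Set.mem_Ioi.2 (zero_lt_one.trans_le (hK ha))) hB_acc hii'
        (by simpa [B] using hi') hlt)
    · rcases hge.eq_or_lt with h | h
      · exact Or.inl (h ▸ hM)
      · exact Or.inr h
  intro x hx y hy
  rcases lt_trichotomy y x with h | rfl | h
  · rw [Real.dist_eq, abs_of_pos (sub_pos.2 h)]
    exact Or.inr (key x hx y hy h)
  · exact Or.inl (dist_self _)
  · rw [Real.dist_eq, abs_of_neg (sub_neg.2 h), neg_sub]
    exact Or.inr (key y hy x hx h)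

/-! ### Packings of `Ed 1` -/

def toEd1 : ℝ ≃ₗᵢ[ℝ] Ed 1 := (OrthonormalBasis.singleton (Fin 1) ℝ).repr

theorem toEd1_apply (x : ℝ) (i : Fin 1) : toEd1 x i = x :=
  OrthonormalBasis.singleton_repr x i

theorem toEd1_symm_apply (x : Ed 1) : toEd1.symm x = x 0 :=
  toEd1.symm_apply_eq.2 (by ext i; rw [toEd1_apply, Subsingleton.elim i 0])

theorem volume_image_toEd1 (A : Set ℝ) : volume (toEd1 '' A) = volume A := by
  rw [toEd1.image_eq_preimage_symm]
  exact toEd1.symm.measurePreserving.measure_preimage_equiv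
    (f := toEd1.symm.toHomeomorph.toMeasurableEquiv) A

theorem cube_one_eq (t : ℝ) : cube 1 t = toEd1 '' Icc (-(t / 2)) (t / 2) := by
  ext x
  rw [toEd1.image_eq_preimage_symm]
  simp [cube, abs_le, Fin.forall_fin_one, toEd1_symm_apply]

theorem packing_one_image (Y : Set ℝ) :
    packing 1 (toEd1 '' Y) = toEd1 '' ⋃ y ∈ Y, closedBall y 2⁻¹ := by
  simp only [packing, Set.image_iUnion₂, LinearIsometryEquiv.image_closedBall, Set.biUnion_image]

theorem volume_packing_one_image_inter_cube (Y : Set ℝ) (t : ℝ) :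
    volume (packing 1 (toEd1 '' Y) ∩ cube 1 t) =
      volume ((⋃ y ∈ Y, closedBall y 2⁻¹) ∩ Icc (-(t / 2)) (t / 2)) := by
  rw [packing_one_image, cube_one_eq, ← Set.image_inter toEd1.injective, volume_image_toEd1]

theorem volume_cube_one (t : ℝ) : volume (cube 1 t) = ENNReal.ofReal t := by
  rw [cube_one_eq, volume_image_toEd1, Real.volume_Icc]
  ring_nf

theorem isAdmissible_one_image_iff {K Y : Set ℝ} :
    IsAdmissible 1 K (toEd1 '' Y) ↔ Y.Pairwise (fun x y => 1 ≤ dist x y) ∧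
      ∀ x ∈ Y, ∀ y ∈ Y, dist x y ∈ insert (0 : ℝ) (K ∪ Ioi (sSup K)) := by
  simp only [IsAdmissible, IsPackingCenters, Set.Pairwise, Set.forall_mem_image,
    LinearIsometryEquiv.dist_map, toEd1.injective.ne_iff]

theorem isPeriodic_one_image_periodicSet {L : ℝ} (hL : L ≠ 0) {P : Finset ℝ} (hP : P.Nonempty) :
    IsPeriodic 1 (toEd1 '' periodicSet L P) := by
  classical
  let b := ((Module.Basis.singleton (Fin 1) ℝ).unitsSMul fun _ => Units.mk0 L hL).map
    toEd1.toLinearEquiv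
  have hb : Set.range b = {toEd1 L} := by
    rw [Set.range_unique]
    simp [b, Module.Basis.unitsSMul_apply]
  refine ⟨b, P.image toEd1, hP.image _, ?_⟩
  have key : ∀ (k : ℤ) (p : ℝ), toEd1 (k * L + p) = k • toEd1 L + toEd1 p := by
    intro k p
    rw [map_add, ← map_zsmul, zsmul_eq_mul]
  ext x
  simp only [hb, Submodule.mem_span_singleton, Finset.mem_image, periodicSet, Set.mem_image,
    Set.mem_ofPred_eq]
  constructor
  · rintro ⟨_, ⟨k, p, hp, rfl⟩, rfl⟩
    exact ⟨_, ⟨k, rfl⟩, _, ⟨p, hp, rfl⟩, key k p⟩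
  · rintro ⟨_, ⟨k, rfl⟩, _, ⟨p, hp, rfl⟩, rfl⟩
    exact ⟨_, ⟨k, p, hp, rfl⟩, key k p⟩

theorem tendsto_ofReal_div_volume_cube_one (ρ C : ℝ) :
    Tendsto (fun t => ENNReal.ofReal (ρ * t + C) / volume (cube 1 t)) atTop
      (𝓝 (ENNReal.ofReal ρ)) := by
  have hlim : Tendsto (fun t : ℝ => ρ + C * t⁻¹) atTop (𝓝 ρ) := by
    simpa using tendsto_const_nhds.add (tendsto_inv_atTop_zero.const_mul C)
  refine (ENNReal.tendsto_ofReal hlim).congr' ?_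
  filter_upwards [eventually_gt_atTop 0] with t ht
  rw [volume_cube_one, ← ENNReal.ofReal_div_of_pos ht]
  congr 1
  field_simp

theorem dens_one_le_of_volume_le {X : Set (Ed 1)} {ρ C : ℝ}
    (h : ∀ᶠ t in atTop, volume (packing 1 X ∩ cube 1 t) ≤ ENNReal.ofReal (ρ * t + C)) :
    dens 1 X ≤ ENNReal.ofReal ρ := by
  rw [← (tendsto_ofReal_div_volume_cube_one ρ C).limsup_eq]
  exact limsup_le_limsup (h.mono fun t ht => ENNReal.div_le_div_right ht _)

theorem le_dens_one_of_le_volume {X : Set (Ed 1)} {ρ C : ℝ}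
    (h : ∀ᶠ t in atTop, ENNReal.ofReal (ρ * t + C) ≤ volume (packing 1 X ∩ cube 1 t)) :
    ENNReal.ofReal ρ ≤ dens 1 X := by
  rw [← (tendsto_ofReal_div_volume_cube_one ρ C).limsup_eq]
  exact limsup_le_limsup (h.mono fun t ht => ENNReal.div_le_div_right ht _)

theorem dens_le_of_isAdmissible {K : Set ℝ} (hM : sSup K ∈ K) {ρ C : ℝ} (hρ : 0 ≤ ρ)
    (hC : 0 ≤ C) (hbound : ∀ q (W : List K), (gapDFA K).evalFrom q W ∈ (gapDFA K).accept →
      (W.length : ℝ) ≤ ρ * (W.map Subtype.val).sum + C)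
    {X : Set (Ed 1)} (hX : IsAdmissible 1 K X) : dens 1 X ≤ ENNReal.ofReal ρ := by
  obtain ⟨Y, rfl⟩ : ∃ Y, X = toEd1 '' Y := ⟨_, (toEd1.surjective.image_preimage X).symm⟩
  obtain ⟨hsep, hY⟩ := isAdmissible_one_image_iff.1 hX
  refine dens_one_le_of_volume_le (C := ρ + C + 1) ?_
  filter_upwards [eventually_ge_atTop 0] with t ht
  rw [volume_packing_one_image_inter_cube]
  exact volume_biUnion_closedBall_inter_Icc_le_of_bound hY hM hρ hC hsep hbound ht

theorem le_dens_one_image_periodicSet {L : ℝ} (hL : 0 < L) {P : Finset ℝ} (hP : ↑P ⊆ Ico 0 L)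
    (hsep : (periodicSet L P).Pairwise fun x y => 1 ≤ dist x y) :
    ENNReal.ofReal (P.card / L) ≤ dens 1 (toEd1 '' periodicSet L P) := by
  refine le_dens_one_of_le_volume (C := -(P.card / L + 2 * P.card)) ?_
  filter_upwards [eventually_ge_atTop 1] with t ht
  rw [volume_packing_one_image_inter_cube, ← sub_eq_add_neg]
  exact le_volume_periodicSet hL hP hsep ht

/-- Corollary `existence_of_maximal_periodic_packing_finite_case`: for finite
`K ⊆ [1,∞)` with `1 ∈ K`, some periodic `K`-admissible packing of `ℝ`
attains `Δ_1(K)`. -/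
theorem exists_periodic_optimal_packing_dim1_finite
    (K : Set ℝ) (hKfin : K.Finite) (hK1 : (1 : ℝ) ∈ K) (hKsub : K ⊆ Ici 1) :
    ∃ X : Set (Ed 1), IsAdmissible 1 K X ∧ IsPeriodic 1 X ∧
      dens 1 X = packingConst 1 K := by
  have hM : sSup K ∈ K := Set.Nonempty.csSup_mem ⟨1, hK1⟩ hKfin
  obtain ⟨q, hq, b, hb, hcyc, C, hC, hbound⟩ :=
    gapDFA.exists_cycle_forall_length_le hKfin hKsub hM
  set g := b.map Subtype.val
  have hpos : ∀ a ∈ g, 0 < a := by simpa [g] using fun a ha _ => zero_lt_one.trans_le (hKsub ha)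
  have hg : g ≠ [] := List.map_eq_nil_iff.not.2 hb
  have hL : 0 < g.sum := List.sum_pos _ hpos hg
  have hY := forall_dist_mem_periodicSetOfGaps_of_cycle hKsub hM hq hcyc
  have hsep := pairwise_one_le_dist_of_forall_dist_mem hKsub hM hY
  have hadm : IsAdmissible 1 K (toEd1 '' periodicSetOfGaps g) :=
    isAdmissible_one_image_iff.2 ⟨hsep, hY⟩
  refine ⟨_, hadm, isPeriodic_one_image_periodicSet hL.ne' ?_,
    le_antisymm (le_iSup₂ (f := fun X (_ : IsAdmissible 1 K X) => dens 1 X) _ hadm) ?_⟩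
  · rw [← Finset.card_pos, card_partialSums hpos]
    exact List.length_pos_iff.2 hg
  calc packingConst 1 K ≤ ENNReal.ofReal (b.length / g.sum) :=
        iSup₂_le fun X hX => dens_le_of_isAdmissible hM (by positivity) hC hbound hX
    _ ≤ dens 1 (toEd1 '' periodicSetOfGaps g) := by
        have := le_dens_one_image_periodicSet hL (partialSums_subset_Ico hpos) hsep
        rwa [card_partialSums hpos, List.length_map] at this
end
end

section
/- Let 1 < α < β and K = {1, α, β}. Then Δ_1(K) is given as follows: (1) if β ≤ 2 then Δ_1(K) = 1; (2) if β > 2, α = 2 and β ≤ 3 then Δ_1(K) = 1; (3) if α = 2 and β > 3 then Δ_1(K) = 3/(2+β); (4) if α ≠ 2 and 2 < β ≤ 1+α then Δ_1(K) = 2/(1+α); (5) if α ≠ 2, 1+α < β ≤ 2α and 2α ≤ β+1 then Δ_1(K) = 1/α; (6) if α ≠ 2, 1+α < β ≤ 2α and 2α > β+1 then Δ_1(K) = 2/(1+β); (7) if α ≠ 2 and 2α < β then Δ_1(K) = 2/(1+β). In each case the value is attained by a periodic K-admissible packing. -/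
open MeasureTheory Filter Set Metric FourierTransform
open scoped ENNReal

noncomputable section

/-- `Δ_1(K) = v` and the value `v` is attained by a periodic `K`-admissible
packing of `ℝ`. -/
def AttainedValue (K : Set ℝ) (v : ℝ) : Prop :=
  packingConst 1 K = ENNReal.ofReal v ∧
  ∃ X : Set (Ed 1), IsAdmissible 1 K X ∧ IsPeriodic 1 X ∧
    dens 1 X = ENNReal.ofReal v


/-!
On the real line a `{1, α, β}`-admissible packing is a set of centres whose mutual distances all
lie in `D = {1, α} ∪ [β, ∞)`, and density can be counted in windows: if no half-open window of
length `ℓ` holds more than `m` centres the density is at most `m / ℓ`, and if every such window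
holds `m` centres it is at least `m / ℓ`.

Upper bound: two consecutive gaps `g₁, g₂` satisfy `g₁, g₂, g₁ + g₂ ∈ D`. A case analysis shows
`g₁ + g₂ ≥ 1 + α`, `2α` or `1 + β` in cases (4), (5) and (6–7), and when `α = 2 < 3 < β` any three
consecutive gaps sum to at least `2 + β`. Hence `m + 1` consecutive centres span at least `ℓ`,
where `m / ℓ` is the claimed value (`m = ℓ = 1` in cases (1–2)).

Lower bound: blocks of `r` unit-spaced centres repeated with period `L` (`ℤ`, `αℤ`, pairs with
period `1 + α` or `1 + β`, triples with period `2 + β`) are admissible and have density `r / L`.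
-/

namespace ThreeDistancePacking

open scoped Topology

def toReal : Ed 1 ≃L[ℝ] ℝ :=
  (EuclideanSpace.equiv (Fin 1) ℝ).trans (ContinuousLinearEquiv.funUnique (Fin 1) ℝ ℝ)

lemma toReal_apply (x : Ed 1) : toReal x = x 0 := rfl

lemma dist_eq_abs_toReal_sub (x y : Ed 1) : dist x y = |toReal x - toReal y| := by
  simp [EuclideanSpace.dist_eq, Real.dist_eq, Real.sqrt_sq_eq_abs, toReal_apply]

lemma volume_preimage_toReal (s : Set ℝ) : volume (toReal ⁻¹' s) = volume s :=
  ((volume_preserving_funUnique (Fin 1) ℝ).comp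
    (EuclideanSpace.volume_preserving_symm_measurableEquiv_toLp (Fin 1))).measure_preimage_emb
    toReal.toHomeomorph.measurableEmbedding s

def linePacking (S : Set ℝ) : Set ℝ := ⋃ s ∈ S, Icc (s - 2⁻¹) (s + 2⁻¹)

def lineDens (S : Set ℝ) : ℝ≥0∞ :=
  limsup (fun t : ℝ => volume (linePacking S ∩ Icc (-(t / 2)) (t / 2)) / ENNReal.ofReal t) atTop

lemma packing_preimage_toReal (S : Set ℝ) :
    packing 1 (toReal ⁻¹' S) = toReal ⁻¹' linePacking S := by
  ext y
  simp only [packing, linePacking, mem_iUnion, mem_preimage, mem_closedBall,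
    dist_eq_abs_toReal_sub, mem_Icc, abs_le, exists_prop]
  constructor
  · rintro ⟨x, hx, h₁, h₂⟩
    exact ⟨toReal x, hx, by linarith, by linarith⟩
  · rintro ⟨s, hs, h₁, h₂⟩
    refine ⟨toReal.symm s, by simpa using hs, ?_, ?_⟩ <;>
      simp only [ContinuousLinearEquiv.apply_symm_apply] <;> linarith

lemma dens_preimage_toReal (S : Set ℝ) : dens 1 (toReal ⁻¹' S) = lineDens S := by
  have hcube (t : ℝ) : cube 1 t = toReal ⁻¹' Icc (-(t / 2)) (t / 2) := by
    ext x
    simp [cube, toReal_apply, abs_le]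
  simp only [dens, lineDens, hcube, packing_preimage_toReal, ← preimage_inter,
    volume_preimage_toReal, Real.volume_Icc, sub_neg_eq_add, add_halves]

lemma tendsto_ofReal_mul_add_div (c C : ℝ) :
    Tendsto (fun t : ℝ => ENNReal.ofReal (c * t + C) / ENNReal.ofReal t) atTop
      (𝓝 (ENNReal.ofReal c)) := by
  have hlim : Tendsto (fun t : ℝ => c + C / t) atTop (𝓝 c) := by
    simpa using (tendsto_const_nhds (x := c)).add
      ((tendsto_const_nhds (x := C)).div_atTop tendsto_id)
  refine ((ENNReal.continuous_ofReal.tendsto c).comp hlim).congr' ?_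
  filter_upwards [eventually_gt_atTop 0] with t ht
  rw [Function.comp_apply, ← ENNReal.ofReal_div_of_pos ht, add_div, mul_div_cancel_right₀ _ ht.ne']

lemma lineDens_le_of_eventually_le {S : Set ℝ} {c C : ℝ}
    (h : ∀ᶠ t in atTop,
      volume (linePacking S ∩ Icc (-(t / 2)) (t / 2)) ≤ ENNReal.ofReal (c * t + C)) :
    lineDens S ≤ ENNReal.ofReal c := by
  rw [lineDens, ← (tendsto_ofReal_mul_add_div c C).limsup_eq]
  refine limsup_le_limsup ?_ isCobounded_le_of_bot isBounded_le_of_top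
  filter_upwards [h] with t ht using ENNReal.div_le_div_right ht _

lemma le_lineDens_of_eventually_le {S : Set ℝ} {c C : ℝ}
    (h : ∀ᶠ t in atTop,
      ENNReal.ofReal (c * t + C) ≤ volume (linePacking S ∩ Icc (-(t / 2)) (t / 2))) :
    ENNReal.ofReal c ≤ lineDens S := by
  rw [lineDens, ← (tendsto_ofReal_mul_add_div c C).limsup_eq]
  refine limsup_le_limsup ?_ isCobounded_le_of_bot isBounded_le_of_top
  filter_upwards [h] with t ht using ENNReal.div_le_div_right ht _

lemma volume_linePacking_inter_le {S : Set ℝ} {a b : ℝ} {T : Finset ℝ}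
    (hT : S ∩ Icc (a - 2⁻¹) (b + 2⁻¹) ⊆ T) :
    volume (linePacking S ∩ Icc a b) ≤ T.card := by
  have hsub : linePacking S ∩ Icc a b ⊆ ⋃ s ∈ T, Icc (s - 2⁻¹) (s + 2⁻¹) := by
    rintro x ⟨hx, hxa, hxb⟩
    obtain ⟨s, hs, hxs⟩ := mem_iUnion₂.mp hx
    exact mem_iUnion₂.mpr ⟨s, hT ⟨hs, by linarith [hxs.2], by linarith [hxs.1]⟩, hxs⟩
  calc volume (linePacking S ∩ Icc a b)
      ≤ volume (⋃ s ∈ T, Icc (s - 2⁻¹) (s + 2⁻¹)) := measure_mono hsub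
    _ ≤ ∑ s ∈ T, volume (Icc (s - 2⁻¹) (s + 2⁻¹)) := measure_biUnion_finset_le T _
    _ = T.card := by norm_num [Real.volume_Icc]

lemma card_le_volume_linePacking_inter {S : Set ℝ} (hS : S.Pairwise fun a b => 1 ≤ |a - b|)
    {a b : ℝ} {T : Finset ℝ} (hT : ↑T ⊆ S ∩ Icc (a + 2⁻¹) (b - 2⁻¹)) :
    (T.card : ℝ≥0∞) ≤ volume (linePacking S ∩ Icc a b) := by
  have hdisj : (T : Set ℝ).PairwiseDisjoint fun s => Ioo (s - 2⁻¹) (s + 2⁻¹) := by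
    intro s hs s' hs' hne
    refine Set.disjoint_left.mpr fun x ⟨hx₁, hx₂⟩ ⟨hx₁', hx₂'⟩ => ?_
    have hlt : |s - s'| < 1 := abs_sub_lt_iff.mpr ⟨by linarith, by linarith⟩
    exact (hS (hT hs).1 (hT hs').1 hne).not_gt hlt
  have hsub : (⋃ s ∈ T, Ioo (s - 2⁻¹) (s + 2⁻¹)) ⊆ linePacking S ∩ Icc a b := by
    intro x hx
    obtain ⟨s, hs, hxs⟩ := mem_iUnion₂.mp hx
    obtain ⟨hsS, hsa, hsb⟩ := hT hs
    exact ⟨mem_iUnion₂.mpr ⟨s, hsS, Ioo_subset_Icc_self hxs⟩,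
      by linarith [hxs.1], by linarith [hxs.2]⟩
  calc (T.card : ℝ≥0∞) = ∑ s ∈ T, volume (Ioo (s - 2⁻¹) (s + 2⁻¹)) := by
        norm_num [Real.volume_Ioo]
    _ = volume (⋃ s ∈ T, Ioo (s - 2⁻¹) (s + 2⁻¹)) :=
        (measure_biUnion_finset hdisj fun _ _ => measurableSet_Ioo).symm
    _ ≤ volume (linePacking S ∩ Icc a b) := measure_mono hsub

lemma card_le_of_forall_card_Ico_le {S : Set ℝ} {m : ℕ} {ℓ : ℝ} (hℓ : 0 < ℓ)
    (h : ∀ x (T : Finset ℝ), ↑T ⊆ S ∩ Ico x (x + ℓ) → T.card ≤ m)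
    {a b : ℝ} {T : Finset ℝ} (hT : ↑T ⊆ S ∩ Icc a b) :
    T.card ≤ m * (⌊(b - a) / ℓ⌋₊ + 1) := by
  classical
  have hmaps : ∀ s ∈ T, ⌊(s - a) / ℓ⌋₊ ∈ Finset.range (⌊(b - a) / ℓ⌋₊ + 1) := by
    intro s hs
    obtain ⟨-, -, hsb⟩ := hT hs
    exact Finset.mem_range_succ_iff.mpr <| Nat.floor_le_floor <| by gcongr
  have hfibre : ∀ k ∈ Finset.range (⌊(b - a) / ℓ⌋₊ + 1),
      (T.filter fun s => ⌊(s - a) / ℓ⌋₊ = k).card ≤ m := by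
    intro k _
    refine h (a + k * ℓ) _ fun s hs => ?_
    obtain ⟨hsT, hsk⟩ := Finset.mem_filter.mp hs
    obtain ⟨hsS, hsa, -⟩ := hT hsT
    obtain ⟨hk₁, hk₂⟩ := (Nat.floor_eq_iff (div_nonneg (sub_nonneg.mpr hsa) hℓ.le)).mp hsk
    rw [le_div_iff₀ hℓ] at hk₁
    rw [div_lt_iff₀ hℓ] at hk₂
    exact ⟨hsS, by linarith, by linarith⟩
  simpa using Finset.card_le_mul_card_image_of_maps_to hmaps m hfibre

lemma lineDens_le_of_forall_card_Ico_le {S : Set ℝ} {m : ℕ} {ℓ : ℝ} (hℓ : 0 < ℓ)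
    (h : ∀ x (T : Finset ℝ), ↑T ⊆ S ∩ Ico x (x + ℓ) → T.card ≤ m) :
    lineDens S ≤ ENNReal.ofReal (m / ℓ) := by
  refine lineDens_le_of_eventually_le (C := m / ℓ + m) ?_
  filter_upwards [eventually_ge_atTop 0] with t ht
  set N := ⌊(t / 2 + 2⁻¹ - (-(t / 2) - 2⁻¹)) / ℓ⌋₊ with hN_def
  have hfin : (S ∩ Icc (-(t / 2) - 2⁻¹) (t / 2 + 2⁻¹)).Finite := by
    by_contra hinf
    obtain ⟨T, hT, hcard⟩ := Set.Infinite.exists_subset_card_eq hinf (m * (N + 1) + 1)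
    have := card_le_of_forall_card_Ico_le hℓ h hT
    rw [← hN_def] at this
    omega
  have hcard := card_le_of_forall_card_Ico_le hℓ h hfin.coe_toFinset.subset
  rw [← hN_def] at hcard
  have hN : (N : ℝ) ≤ (t + 1) / ℓ :=
    (Nat.floor_le (div_nonneg (by linarith) hℓ.le)).trans_eq (by ring)
  calc volume (linePacking S ∩ Icc (-(t / 2)) (t / 2))
      ≤ hfin.toFinset.card := volume_linePacking_inter_le hfin.coe_toFinset.superset
    _ = ENNReal.ofReal (hfin.toFinset.card : ℝ) := (ENNReal.ofReal_natCast _).symm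
    _ ≤ ENNReal.ofReal (m / ℓ * t + (m / ℓ + m)) := by
      refine ENNReal.ofReal_le_ofReal ?_
      calc (hfin.toFinset.card : ℝ) ≤ m * (N + 1) := by exact_mod_cast hcard
        _ ≤ m * ((t + 1) / ℓ + 1) := by gcongr
        _ = m / ℓ * t + (m / ℓ + m) := by ring

lemma le_lineDens_of_forall_exists_card_Ico {S : Set ℝ}
    (hS : S.Pairwise fun a b => 1 ≤ |a - b|) {m : ℕ} {ℓ : ℝ} (hℓ : 0 < ℓ)
    (h : ∀ x, ∃ T : Finset ℝ, ↑T ⊆ S ∩ Ico x (x + ℓ) ∧ T.card = m) :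
    ENNReal.ofReal (m / ℓ) ≤ lineDens S := by
  classical
  choose T hTS hTcard using h
  refine le_lineDens_of_eventually_le (C := -(m / ℓ + m)) (Eventually.of_forall fun t => ?_)
  -- Disjoint windows `[x k, x k + ℓ)`, `k < N`, packed into `[-(t/2) + 1/2, t/2 - 1/2]`.
  set N := ⌊(t - 1) / ℓ⌋₊ with hN_def
  set x : ℕ → ℝ := fun k => -(t / 2) + 2⁻¹ + k * ℓ with hx
  have hdisj : (Finset.range N : Set ℕ).PairwiseDisjoint fun k => T (x k) := by
    intro k _ k' _ hne
    refine Finset.disjoint_left.mpr fun s hs hs' => ?_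
    obtain ⟨-, hs₁, hs₂⟩ := hTS _ hs
    obtain ⟨-, hs₁', hs₂'⟩ := hTS _ hs'
    rcases hne.lt_or_gt with hlt | hlt
    · have : (k : ℝ) + 1 ≤ k' := by exact_mod_cast hlt
      nlinarith
    · have : (k' : ℝ) + 1 ≤ k := by exact_mod_cast hlt
      nlinarith
  have hsub : ↑((Finset.range N).biUnion fun k => T (x k)) ⊆
      S ∩ Icc (-(t / 2) + 2⁻¹) (t / 2 - 2⁻¹) := by
    intro s hs
    obtain ⟨k, hk, hsk⟩ := Finset.mem_biUnion.mp hs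
    obtain ⟨hsS, hs₁, hs₂⟩ := hTS _ hsk
    simp only [hx] at hs₁ hs₂
    have hkN : ((k + 1 : ℕ) : ℝ) ≤ (t - 1) / ℓ :=
      (Nat.le_floor_iff' k.succ_ne_zero).mp (Finset.mem_range.mp hk)
    rw [le_div_iff₀ hℓ] at hkN
    push_cast at hkN
    have hkℓ : 0 ≤ (k : ℝ) * ℓ := by positivity
    exact ⟨hsS, by linarith, by linarith⟩
  have hcard : ((Finset.range N).biUnion fun k => T (x k)).card = N * m := by
    rw [Finset.card_biUnion hdisj]
    simp [hTcard]
  calc ENNReal.ofReal (m / ℓ * t + -(m / ℓ + m))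
      ≤ ENNReal.ofReal (N * m : ℝ) := by
        refine ENNReal.ofReal_le_ofReal ?_
        have hN := Nat.lt_floor_add_one ((t - 1) / ℓ)
        rw [← hN_def] at hN
        calc m / ℓ * t + -(m / ℓ + m) = ((t - 1) / ℓ - 1) * m := by ring
          _ ≤ N * m := by gcongr; linarith
    _ = ((Finset.range N).biUnion fun k => T (x k)).card := by
        rw [hcard]; exact_mod_cast ENNReal.ofReal_natCast _
    _ ≤ volume (linePacking S ∩ Icc (-(t / 2)) (t / 2)) :=
        card_le_volume_linePacking_inter hS hsub

def IsSpanBound (D : Set ℝ) (m : ℕ) (ℓ : ℝ) : Prop :=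
  ∀ f : Fin (m + 1) → ℝ, StrictMono f → (∀ i j, i < j → f j - f i ∈ D) →
    ℓ ≤ f (Fin.last m) - f 0

lemma IsSpanBound.card_le {D S : Set ℝ} {m : ℕ} {ℓ : ℝ} (hspan : IsSpanBound D m ℓ)
    (hS : S.Pairwise fun a b => |a - b| ∈ D) {x : ℝ} {T : Finset ℝ}
    (hT : ↑T ⊆ S ∩ Ico x (x + ℓ)) : T.card ≤ m := by
  by_contra! hm
  set f : Fin (m + 1) → ℝ := fun i => T.orderEmbOfFin rfl (Fin.castLE hm i)
  have hf : StrictMono f := (T.orderEmbOfFin rfl).strictMono.comp (Fin.strictMono_castLE hm)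
  have hfT (i : Fin (m + 1)) : f i ∈ T := T.orderEmbOfFin_mem rfl _
  have hgaps (i j : Fin (m + 1)) (hij : i < j) : f j - f i ∈ D := by
    simpa [abs_of_pos (sub_pos.mpr (hf hij))] using
      hS (hT (hfT j)).1 (hT (hfT i)).1 (hf hij).ne'
  have hspan' := hspan f hf hgaps
  obtain ⟨-, h₀, -⟩ := hT (hfT 0)
  obtain ⟨-, -, hlast⟩ := hT (hfT (Fin.last m))
  linarith

/-- `K ∪ (sup K, ∞)` for `K = {1, α, β}`: the possible distances between distinct centres. -/
def gapSet (α β : ℝ) : Set ℝ := {1, α} ∪ Ici β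

section GapSet

variable {α β : ℝ}

lemma mem_gapSet {d : ℝ} : d ∈ gapSet α β ↔ d = 1 ∨ d = α ∨ β ≤ d := by
  simp [gapSet, or_assoc]

lemma one_mem_gapSet : (1 : ℝ) ∈ gapSet α β := mem_gapSet.mpr (Or.inl rfl)

lemma left_mem_gapSet : α ∈ gapSet α β := mem_gapSet.mpr (Or.inr (Or.inl rfl))

lemma mem_gapSet_of_le {d : ℝ} (h : β ≤ d) : d ∈ gapSet α β := mem_gapSet.mpr (Or.inr (Or.inr h))

lemma one_le_of_mem_gapSet (hα : 1 ≤ α) (hβ : 1 ≤ β) {d : ℝ} (hd : d ∈ gapSet α β) : 1 ≤ d := by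
  rcases mem_gapSet.mp hd with rfl | rfl | h <;> linarith

lemma sSup_one_left_right (hα : 1 < α) (hβ : α < β) : sSup ({1, α, β} : Set ℝ) = β := by
  rw [csSup_insert (bddAbove_def.mpr ⟨β, by simp [hβ.le]⟩) (insert_nonempty _ _), csSup_pair]
  simp [hβ.le, (hα.trans hβ).le]

lemma isAdmissible_preimage_toReal_iff (hα : 1 < α) (hβ : α < β) (S : Set ℝ) :
    IsAdmissible 1 {1, α, β} (toReal ⁻¹' S) ↔ S.Pairwise fun a b => |a - b| ∈ gapSet α β := by
  have hdist : insert (0 : ℝ) ({1, α, β} ∪ Ioi (sSup {1, α, β})) = insert 0 (gapSet α β) := by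
    rw [sSup_one_left_right hα hβ]
    ext d
    simp only [mem_insert_iff, mem_union, mem_singleton_iff, mem_Ioi, mem_gapSet,
      le_iff_eq_or_lt, eq_comm (a := β)]
    tauto
  simp only [IsAdmissible, IsPackingCenters, hdist, dist_eq_abs_toReal_sub]
  constructor
  · rintro ⟨-, hmem⟩ a ha b hb hab
    have := hmem (toReal.symm a) (by simpa using ha) (toReal.symm b) (by simpa using hb)
    simp only [ContinuousLinearEquiv.apply_symm_apply] at this
    exact (mem_insert_iff.mp this).resolve_left (abs_ne_zero.mpr (sub_ne_zero.mpr hab))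
  · intro h
    refine ⟨fun x hx y hy hxy => ?_, fun x hx y hy => ?_⟩
    · have hne : toReal x ≠ toReal y := toReal.injective.ne hxy
      exact one_le_of_mem_gapSet hα.le (hα.trans hβ).le (h hx hy hne)
    · by_cases hxy : toReal x = toReal y
      · simp [hxy]
      · exact mem_insert_of_mem _ (h hx hy hxy)

lemma isSpanBound_one (hα : 1 ≤ α) (hβ : 1 ≤ β) : IsSpanBound (gapSet α β) 1 1 :=
  fun _ _ hgaps => one_le_of_mem_gapSet hα hβ (hgaps 0 1 (by decide))

end GapSet

lemma isSpanBound_two {D : Set ℝ} {ℓ : ℝ}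
    (h : ∀ g₁ ∈ D, ∀ g₂ ∈ D, g₁ + g₂ ∈ D → ℓ ≤ g₁ + g₂) : IsSpanBound D 2 ℓ := by
  intro f _ hgaps
  show ℓ ≤ f 2 - f 0
  have := h _ (hgaps 0 1 (by decide)) _ (hgaps 1 2 (by decide))
    (by convert hgaps 0 2 (by decide) using 1; ring)
  linarith

lemma isSpanBound_three {D : Set ℝ} {ℓ : ℝ}
    (h : ∀ g₁ ∈ D, ∀ g₂ ∈ D, ∀ g₃ ∈ D, g₁ + g₂ ∈ D → g₂ + g₃ ∈ D → g₁ + g₂ + g₃ ∈ D →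
      ℓ ≤ g₁ + g₂ + g₃) : IsSpanBound D 3 ℓ := by
  intro f _ hgaps
  show ℓ ≤ f 3 - f 0
  have := h _ (hgaps 0 1 (by decide)) _ (hgaps 1 2 (by decide)) _ (hgaps 2 3 (by decide))
    (by convert hgaps 0 2 (by decide) using 1; ring)
    (by convert hgaps 1 3 (by decide) using 1; ring)
    (by convert hgaps 0 3 (by decide) using 1; ring)
  linarith

section Gaps

variable {α β : ℝ}

lemma one_add_le_add_of_mem_gapSet (hα : 1 < α) (hβ : α < β) (hα2 : α ≠ 2) (h2β : 2 < β)
    {g₁ g₂ : ℝ} (h₁ : g₁ ∈ gapSet α β) (h₂ : g₂ ∈ gapSet α β)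
    (h₁₂ : g₁ + g₂ ∈ gapSet α β) : 1 + α ≤ g₁ + g₂ := by
  rw [mem_gapSet] at h₁ h₂ h₁₂
  rcases hα2.lt_or_gt with hα2 | hα2 <;> rcases h₁ with rfl | rfl | h₁ <;>
    rcases h₂ with rfl | rfl | h₂ <;> rcases h₁₂ with h | h | h <;> linarith

lemma two_mul_le_add_of_mem_gapSet (hα : 1 < α) (hα2 : α ≠ 2) (hαβ : 1 + α < β)
    (hβα : 2 * α ≤ β + 1) {g₁ g₂ : ℝ} (h₁ : g₁ ∈ gapSet α β) (h₂ : g₂ ∈ gapSet α β)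
    (h₁₂ : g₁ + g₂ ∈ gapSet α β) : 2 * α ≤ g₁ + g₂ := by
  rw [mem_gapSet] at h₁ h₂ h₁₂
  rcases hα2.lt_or_gt with hα2 | hα2 <;> rcases h₁ with rfl | rfl | h₁ <;>
    rcases h₂ with rfl | rfl | h₂ <;> rcases h₁₂ with h | h | h <;> linarith

lemma one_add_right_le_add_of_mem_gapSet (hα : 1 < α) (hα2 : α ≠ 2) (hαβ : 1 + α < β)
    (hβα : β + 1 < 2 * α ∨ 2 * α < β) {g₁ g₂ : ℝ} (h₁ : g₁ ∈ gapSet α β)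
    (h₂ : g₂ ∈ gapSet α β) (h₁₂ : g₁ + g₂ ∈ gapSet α β) : 1 + β ≤ g₁ + g₂ := by
  rw [mem_gapSet] at h₁ h₂ h₁₂
  rcases hα2.lt_or_gt with hα2 | hα2 <;> rcases hβα with hβα | hβα <;>
    rcases h₁ with rfl | rfl | h₁ <;> rcases h₂ with rfl | rfl | h₂ <;>
    rcases h₁₂ with h | h | h <;> linarith

lemma two_add_le_add_add_of_mem_gapSet (h3β : 3 < β) {g₁ g₂ g₃ : ℝ}
    (h₁ : g₁ ∈ gapSet 2 β) (h₂ : g₂ ∈ gapSet 2 β) (h₃ : g₃ ∈ gapSet 2 β)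
    (h₁₂ : g₁ + g₂ ∈ gapSet 2 β) (h₂₃ : g₂ + g₃ ∈ gapSet 2 β)
    (h₁₂₃ : g₁ + g₂ + g₃ ∈ gapSet 2 β) : 2 + β ≤ g₁ + g₂ + g₃ := by
  have hone (g : ℝ) (hg : g ∈ gapSet 2 β) : 1 ≤ g :=
    one_le_of_mem_gapSet one_le_two (by linarith) hg
  have := hone _ h₁; have := hone _ h₂; have := hone _ h₃
  by_cases hlarge : β ≤ g₁ ∨ β ≤ g₂ ∨ β ≤ g₃
  · rcases hlarge with h | h | h <;> linarith
  push Not at hlarge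
  rw [mem_gapSet] at h₁ h₂ h₃
  rcases h₁ with rfl | rfl | h₁ <;> rcases h₂ with rfl | rfl | h₂ <;>
    rcases h₃ with rfl | rfl | h₃ <;> norm_num [mem_gapSet] at h₁₂ h₂₃ h₁₂₃ ⊢ <;> linarith

end Gaps

lemma dens_le_of_isSpanBound {α β : ℝ} (hα : 1 < α) (hβ : α < β) {m : ℕ} {ℓ : ℝ} (hℓ : 0 < ℓ)
    (hspan : IsSpanBound (gapSet α β) m ℓ) {X : Set (Ed 1)}
    (hX : IsAdmissible 1 {1, α, β} X) : dens 1 X ≤ ENNReal.ofReal (m / ℓ) := by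
  rw [← preimage_image_eq X toReal.injective] at hX ⊢
  rw [dens_preimage_toReal]
  exact lineDens_le_of_forall_card_Ico_le hℓ fun _ _ hT =>
    hspan.card_le ((isAdmissible_preimage_toReal_iff hα hβ _).mp hX) hT

def periodicSet (L : ℝ) (Y : Finset ℝ) : Set ℝ := {x | ∃ k : ℤ, ∃ y ∈ Y, x = k * L + y}

lemma isPeriodic_preimage_toReal_periodicSet {L : ℝ} (hL : L ≠ 0) {Y : Finset ℝ}
    (hY : Y.Nonempty) : IsPeriodic 1 (toReal ⁻¹' periodicSet L Y) := by
  classical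
  let b : Module.Basis (Fin 1) ℝ (Ed 1) :=
    ((Module.Basis.singleton (Fin 1) ℝ).map (LinearEquiv.smulOfNeZero ℝ ℝ L hL)).map
      toReal.symm.toLinearEquiv
  have hspan : Submodule.span ℤ (range b) = Submodule.span ℤ {toReal.symm L} := by
    rw [range_unique]
    congr 2
    simp [b]
  refine ⟨b, Y.image toReal.symm, hY.image _, ?_⟩
  ext x
  simp only [periodicSet, mem_preimage, mem_ofPred_eq, hspan, Submodule.mem_span_singleton,
    Finset.mem_image]
  constructor
  · rintro ⟨k, y, hy, hx⟩
    refine ⟨k • toReal.symm L, ⟨k, rfl⟩, toReal.symm y, ⟨y, hy, rfl⟩, toReal.injective ?_⟩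
    simp [hx, zsmul_eq_mul]
  · rintro ⟨_, ⟨k, rfl⟩, _, ⟨y, hy, rfl⟩, rfl⟩
    exact ⟨k, y, hy, by simp [zsmul_eq_mul]⟩

lemma exists_card_eq_periodicSet_inter_Ico {L : ℝ} (hL : 0 < L) {Y : Finset ℝ}
    (hY : ∀ y ∈ Y, ∀ y' ∈ Y, |y - y'| < L) (x : ℝ) :
    ∃ T : Finset ℝ, ↑T ⊆ periodicSet L Y ∩ Ico x (x + L) ∧ T.card = Y.card := by
  classical
  refine ⟨Y.image fun y => ⌈(x - y) / L⌉ * L + y, ?_, Finset.card_image_of_injOn ?_⟩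
  · intro s hs
    obtain ⟨y, hy, rfl⟩ := Finset.mem_image.mp hs
    have h₁ := Int.le_ceil ((x - y) / L)
    have h₂ := Int.ceil_lt_add_one ((x - y) / L)
    rw [div_le_iff₀ hL] at h₁
    replace h₂ : (⌈(x - y) / L⌉ : ℝ) * L < x - y + L := by
      simpa [add_mul, div_mul_cancel₀ _ hL.ne'] using mul_lt_mul_of_pos_right h₂ hL
    exact ⟨⟨_, y, hy, rfl⟩, by linarith, by linarith⟩
  · intro y hy y' hy' hyy'
    set d : ℤ := ⌈(x - y) / L⌉ - ⌈(x - y') / L⌉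
    have hdL : (d : ℝ) * L = y' - y := by
      simp only [d, Int.cast_sub]
      linarith [hyy']
    have hd : |(d : ℝ)| < 1 := by
      have := hY y' hy' y hy
      rw [← hdL, abs_mul, abs_of_pos hL] at this
      exact (mul_lt_iff_lt_one_left hL).mp this
    have hd0 : d = 0 := Int.abs_lt_one_iff.mp (by exact_mod_cast hd)
    rw [hd0, Int.cast_zero, zero_mul] at hdL
    linarith

def blocks (r : ℕ) (L : ℝ) : Set ℝ := periodicSet L ((Finset.range r).image Nat.cast)

def blockDistances (r : ℕ) (L : ℝ) : Set ℝ :=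
  {d | 0 < d ∧ ∃ n : ℕ, ∃ e : ℤ, |e| < r ∧ d = n * L + e}

lemma sub_mem_blockDistances {r : ℕ} {L : ℝ} (hrL : (r : ℝ) ≤ L) {a b : ℝ}
    (ha : a ∈ blocks r L) (hb : b ∈ blocks r L) (hab : a < b) : b - a ∈ blockDistances r L := by
  obtain ⟨k, _, hiY, rfl⟩ := ha
  obtain ⟨i, hi, rfl⟩ := Finset.mem_image.mp hiY
  obtain ⟨k', _, hjY, rfl⟩ := hb
  obtain ⟨j, hj, rfl⟩ := Finset.mem_image.mp hjY
  rw [Finset.mem_range] at hi hj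
  have hi' : (i : ℝ) < r := by exact_mod_cast hi
  have hj' : (j : ℝ) < r := by exact_mod_cast hj
  have hkk' : k ≤ k' := by
    by_contra! hlt
    have : (k' : ℝ) + 1 ≤ k := by exact_mod_cast hlt
    nlinarith
  refine ⟨sub_pos.mpr hab, (k' - k).toNat, (j : ℤ) - i, ?_, ?_⟩
  · rw [abs_sub_lt_iff]
    omega
  · have : (((k' - k).toNat : ℤ) : ℝ) = k' - k := by
      rw [Int.toNat_of_nonneg (by omega)]
      push_cast
      ring
    push_cast at this ⊢
    rw [this]
    ring

lemma pairwise_blocks_of_subset {r : ℕ} {L : ℝ} (hrL : (r : ℝ) ≤ L) {D : Set ℝ}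
    (hD : blockDistances r L ⊆ D) : (blocks r L).Pairwise fun a b => |a - b| ∈ D := by
  intro a ha b hb hab
  rcases hab.lt_or_gt with h | h
  · rw [abs_sub_comm, abs_of_pos (sub_pos.mpr h)]
    exact hD (sub_mem_blockDistances hrL ha hb h)
  · rw [abs_of_pos (sub_pos.mpr h)]
    exact hD (sub_mem_blockDistances hrL hb ha h)

lemma exists_card_eq_blocks_inter_Ico {r : ℕ} (hr : 0 < r) {L : ℝ} (hrL : (r : ℝ) ≤ L)
    (x : ℝ) : ∃ T : Finset ℝ, ↑T ⊆ blocks r L ∩ Ico x (x + L) ∧ T.card = r := by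
  have hL : 0 < L := lt_of_lt_of_le (by exact_mod_cast hr) hrL
  have hY : ∀ y ∈ (Finset.range r).image (Nat.cast : ℕ → ℝ),
      ∀ y' ∈ (Finset.range r).image (Nat.cast : ℕ → ℝ), |y - y'| < L := by
    simp only [Finset.mem_image, Finset.mem_range]
    rintro _ ⟨i, hi, rfl⟩ _ ⟨j, hj, rfl⟩
    have hi' : (i : ℝ) < r := by exact_mod_cast hi
    have hj' : (j : ℝ) < r := by exact_mod_cast hj
    rw [abs_sub_lt_iff]
    constructor <;> linarith [(i.cast_nonneg : (0 : ℝ) ≤ i), (j.cast_nonneg : (0 : ℝ) ≤ j)]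
  obtain ⟨T, hT, hcard⟩ := exists_card_eq_periodicSet_inter_Ico hL hY x
  refine ⟨T, hT, ?_⟩
  rw [hcard, Finset.card_image_of_injective _ Nat.cast_injective, Finset.card_range]

section BlockGaps

variable {α β : ℝ}

lemma blockDistances_subset_of_le (hβ : 1 ≤ β) {r : ℕ} {L : ℝ} (hL : β + (r - 1) ≤ L)
    (hnear : ∀ j : ℕ, 0 < j → j < r → (j : ℝ) ∈ gapSet α β) :
    blockDistances r L ⊆ gapSet α β := by
  rintro _ ⟨hd, n, e, he, rfl⟩
  rw [abs_lt] at he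
  rcases n with _ | n
  · have he0 : 0 < e := by simpa using hd
    lift e to ℕ using he0.le
    simpa using hnear e (by exact_mod_cast he0) (by exact_mod_cast he.2)
  · have he' : -(r : ℝ) + 1 ≤ e := by exact_mod_cast (by omega : -(r : ℤ) + 1 ≤ e)
    have hn : (0 : ℝ) ≤ n * L := mul_nonneg n.cast_nonneg (by linarith [r.cast_nonneg (α := ℝ)])
    exact mem_gapSet_of_le (by push_cast; linarith)

lemma blockDistances_three_subset (h2 : (2 : ℝ) ∈ gapSet α β) (hβ : 1 ≤ β) :
    blockDistances 3 (2 + β) ⊆ gapSet α β := by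
  refine blockDistances_subset_of_le hβ (by push_cast; linarith) fun j hj0 hj3 => ?_
  interval_cases j
  · exact_mod_cast one_mem_gapSet (α := α) (β := β)
  · exact_mod_cast h2

lemma blockDistances_two_subset (hβ : 1 ≤ β) : blockDistances 2 (1 + β) ⊆ gapSet α β := by
  refine blockDistances_subset_of_le hβ (by push_cast; linarith) fun j hj0 hj2 => ?_
  obtain rfl : j = 1 := by omega
  rw [Nat.cast_one]
  exact one_mem_gapSet

lemma blockDistances_one_subset {L : ℝ} (hL : 0 ≤ L) (h₁ : L ∈ gapSet α β)
    (h₂ : 2 * L ∈ gapSet α β) (h₃ : β ≤ 3 * L) : blockDistances 1 L ⊆ gapSet α β := by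
  rintro _ ⟨hd, n, e, he, rfl⟩
  obtain rfl : e = 0 := Int.abs_lt_one_iff.mp (by exact_mod_cast he)
  obtain rfl | rfl | rfl | hn : n = 0 ∨ n = 1 ∨ n = 2 ∨ 3 ≤ n := by omega
  · simp at hd
  · simpa using h₁
  · simpa using h₂
  · have : (3 : ℝ) ≤ n := by exact_mod_cast hn
    exact mem_gapSet_of_le (by push_cast; nlinarith)

lemma blockDistances_two_one_add_subset (hα : 0 ≤ α) (hβ : β ≤ 1 + α) :
    blockDistances 2 (1 + α) ⊆ gapSet α β := by
  rintro _ ⟨hd, n, e, he, rfl⟩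
  obtain rfl | rfl | rfl : e = -1 ∨ e = 0 ∨ e = 1 := by rw [abs_lt] at he; omega
  all_goals rcases n with _ | _ | n <;> push_cast at hd ⊢ <;> rw [mem_gapSet] <;>
    first
    | (exfalso; linarith)
    | (left; linarith)
    | (right; left; linarith)
    | (right; right; linarith)
    | (right; right; nlinarith [n.cast_nonneg (α := ℝ)])

end BlockGaps

lemma attainedValue_of_blocks {α β : ℝ} (hα : 1 < α) (hβ : α < β) {r m : ℕ} {L ℓ v : ℝ}
    (hr : 0 < r) (hrL : (r : ℝ) ≤ L) (hℓ : 0 < ℓ) (hgaps : blockDistances r L ⊆ gapSet α β)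
    (hspan : IsSpanBound (gapSet α β) m ℓ) (hrv : r / L = v) (hmv : m / ℓ = v) :
    AttainedValue {1, α, β} v := by
  have hL : 0 < L := lt_of_lt_of_le (by exact_mod_cast hr) hrL
  have hpair := pairwise_blocks_of_subset hrL hgaps
  have hadm : IsAdmissible 1 {1, α, β} (toReal ⁻¹' blocks r L) :=
    (isAdmissible_preimage_toReal_iff hα hβ _).mpr hpair
  have hupper (X : Set (Ed 1)) (hX : IsAdmissible 1 {1, α, β} X) :
      dens 1 X ≤ ENNReal.ofReal v :=
    hmv ▸ dens_le_of_isSpanBound hα hβ hℓ hspan hX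
  have hlower : ENNReal.ofReal v ≤ dens 1 (toReal ⁻¹' blocks r L) := by
    rw [dens_preimage_toReal, ← hrv]
    exact le_lineDens_of_forall_exists_card_Ico
      (hpair.mono' fun _ _ => one_le_of_mem_gapSet hα.le (hα.trans hβ).le) hL
      (exists_card_eq_blocks_inter_Ico hr hrL)
  have hdens := le_antisymm (hupper _ hadm) hlower
  refine ⟨le_antisymm (iSup₂_le hupper) (hdens ▸ le_iSup₂_of_le _ hadm le_rfl), _, hadm,
    isPeriodic_preimage_toReal_periodicSet hL.ne' ?_, hdens⟩
  exact (Finset.nonempty_range_iff.mpr hr.ne').image _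

end ThreeDistancePacking

open ThreeDistancePacking in
/-- Lemma `thm:Kalbe`: the exact value of `Δ_1({1, α, β})` for `1 < α < β`,
attained in each case by a periodic packing. -/
theorem packing_const_three_distances
    (α β : ℝ) (hα : 1 < α) (hβ : α < β) (K : Set ℝ) (hK : K = {1, α, β}) :
    (β ≤ 2 → AttainedValue K 1) ∧
    (2 < β → α = 2 → β ≤ 3 → AttainedValue K 1) ∧
    (α = 2 → 3 < β → AttainedValue K (3 / (2 + β))) ∧
    (α ≠ 2 → 2 < β → β ≤ 1 + α → AttainedValue K (2 / (1 + α))) ∧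
    (α ≠ 2 → 1 + α < β → β ≤ 2 * α → 2 * α ≤ β + 1 → AttainedValue K (1 / α)) ∧
    (α ≠ 2 → 1 + α < β → β ≤ 2 * α → β + 1 < 2 * α → AttainedValue K (2 / (1 + β))) ∧
    (α ≠ 2 → 2 * α < β → AttainedValue K (2 / (1 + β))) := by
  subst hK
  have h1α : (1 : ℝ) ≤ α := hα.le
  have h1β : (1 : ℝ) ≤ β := (hα.trans hβ).le
  refine ⟨fun hβ2 => ?_, fun _ hα2 hβ3 => ?_, fun hα2 hβ3 => ?_, fun hα2 hβ2 hβα => ?_,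
    fun hα2 hαβ _ hβα => ?_, fun hα2 hαβ _ hβα => ?_, fun hα2 hβα => ?_⟩
  · exact attainedValue_of_blocks hα hβ (r := 1) (m := 1) one_pos (by norm_num) one_pos
      (blockDistances_one_subset zero_le_one one_mem_gapSet (mem_gapSet_of_le (by linarith))
        (by linarith))
      (isSpanBound_one h1α h1β) (by norm_num) (by norm_num)
  · subst hα2
    exact attainedValue_of_blocks hα hβ (r := 1) (m := 1) one_pos (by norm_num) one_pos
      (blockDistances_one_subset zero_le_one one_mem_gapSet (by simpa using left_mem_gapSet)
        (by linarith))
      (isSpanBound_one h1α h1β) (by norm_num) (by norm_num)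
  · subst hα2
    exact attainedValue_of_blocks hα hβ (r := 3) (m := 3) three_pos (by push_cast; linarith) (by linarith)
      (blockDistances_three_subset left_mem_gapSet h1β)
      (isSpanBound_three fun _ h₁ _ h₂ _ h₃ => two_add_le_add_add_of_mem_gapSet hβ3 h₁ h₂ h₃)
      (by norm_num) (by norm_num)
  · exact attainedValue_of_blocks hα hβ (r := 2) (m := 2) two_pos (by push_cast; linarith) (by linarith)
      (blockDistances_two_one_add_subset (by linarith) hβα)
      (isSpanBound_two fun _ h₁ _ h₂ => one_add_le_add_of_mem_gapSet hα hβ hα2 hβ2 h₁ h₂)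
      (by norm_num) (by norm_num)
  · exact attainedValue_of_blocks hα hβ (r := 1) (m := 2) one_pos (by push_cast; linarith) (by linarith)
      (blockDistances_one_subset (by linarith) left_mem_gapSet (mem_gapSet_of_le ‹_›)
        (by linarith))
      (isSpanBound_two fun _ h₁ _ h₂ => two_mul_le_add_of_mem_gapSet hα hα2 hαβ hβα h₁ h₂)
      (by norm_num) (by push_cast; field_simp)
  · exact attainedValue_of_blocks hα hβ (r := 2) (m := 2) two_pos (by push_cast; linarith) (by linarith)
      (blockDistances_two_subset h1β)
      (isSpanBound_two fun _ h₁ _ h₂ =>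
        one_add_right_le_add_of_mem_gapSet hα hα2 hαβ (Or.inl hβα) h₁ h₂)
      (by norm_num) (by norm_num)
  · exact attainedValue_of_blocks hα hβ (r := 2) (m := 2) two_pos (by push_cast; linarith) (by linarith)
      (blockDistances_two_subset h1β)
      (isSpanBound_two fun _ h₁ _ h₂ =>
        one_add_right_le_add_of_mem_gapSet hα hα2 (by linarith) (Or.inr hβα) h₁ h₂)
      (by norm_num) (by norm_num)
end
end
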